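/- arXiv:2502.10655 — 7 statements merged into one kernel-verified Lean document; each statement's English description precedes it below -/
import Mathlib

section
/- For sequences of integers $(a_i)_{i\in\mathbb{Z}}$ and $(b_i)_{i\in\mathbb{Z}}$ with finite support, in the Laurent polynomial ring $\mathbb{Z}[q^{\pm 1}]$ (or in any commutative ring with $q$ invertible), the identity $\sum_i \big((q^{a_{i+1}-a_i}-1) - q^{a_{i+1}-a_i}(1-q^{a_i-b_i})(1-q^{a_i-b_{i-1}})\big) = \sum_i \big((q^{b_{i+1}-b_i}-1) - q^{b_i-b_{i-1}}(1-q^{a_i-b_i})(1-q^{a_{i+1}-b_i})\big)$ holds, where the sums run over all integers $i$ (all but finitely many terms vanish). -/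
private lemma keyAlg {R : Type*} [CommRing R] (x x' y y' xi yi y₀i : R)
    (hx : x * xi = 1) (hy : y * yi = 1) :
    ((x' * xi - 1) - (x' * xi) * (1 - x * yi) * (1 - x * y₀i)) -
      ((y' * yi - 1) - (y * y₀i) * (1 - x * yi) * (1 - x' * yi)) =
    (x' * yi - y' * yi) - (x * y₀i - y * y₀i) := by
  linear_combination (x' * yi + x' * y₀i - x' * x * yi * y₀i) * hx -
    (x * y₀i + x' * y₀i - x * x' * yi * y₀i) * hy

private lemma shift_finite {c : ℤ → ℤ} (hc : {i : ℤ | c i ≠ 0}.Finite) (k : ℤ) :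
    {i : ℤ | c (i + k) ≠ 0}.Finite := by
  have : {i : ℤ | c (i + k) ≠ 0} = (fun i => i + k) ⁻¹' {i : ℤ | c i ≠ 0} := rfl
  rw [this]
  exact hc.preimage (Set.injOn_of_injective (add_left_injective k))

/-- For integer sequences `a b : ℤ → ℤ` with finite support, in any
commutative ring with an invertible element `q`, the telescoping identity of
Lemma 5.3 holds, where both sums run over all integers (all but finitely many
terms vanish). -/
theorem stmt_0 (R : Type*) [CommRing R] (q : Rˣ) (a b : ℤ → ℤ)
    (ha : {i : ℤ | a i ≠ 0}.Finite) (hb : {i : ℤ | b i ≠ 0}.Finite) :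
    (∑ᶠ i : ℤ, ((((q ^ (a (i + 1) - a i) : Rˣ) : R) - 1) -
        ((q ^ (a (i + 1) - a i) : Rˣ) : R) * (1 - ((q ^ (a i - b i) : Rˣ) : R)) *
          (1 - ((q ^ (a i - b (i - 1)) : Rˣ) : R)))) =
    (∑ᶠ i : ℤ, ((((q ^ (b (i + 1) - b i) : Rˣ) : R) - 1) -
        ((q ^ (b i - b (i - 1)) : Rˣ) : R) * (1 - ((q ^ (a i - b i) : Rˣ) : R)) *
          (1 - ((q ^ (a (i + 1) - b i) : Rˣ) : R)))) := by
  set e : ℤ → R := fun n => ((q ^ n : Rˣ) : R) with he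
  have hsplit : ∀ m n : ℤ, e (m - n) = e m * e (-n) := by
    intro m n
    simp only [he, ← Units.val_mul, ← zpow_add, sub_eq_add_neg]
  have hinv : ∀ n : ℤ, e n * e (-n) = 1 := by
    intro n
    simp only [he, ← Units.val_mul, ← zpow_add, add_neg_cancel, zpow_zero, Units.val_one]
  have he0 : e 0 = 1 := by simp [he]
  set L : ℤ → R := fun i => (e (a (i + 1) - a i) - 1) -
      e (a (i + 1) - a i) * (1 - e (a i - b i)) * (1 - e (a i - b (i - 1))) with hLdef
  set Rt : ℤ → R := fun i => (e (b (i + 1) - b i) - 1) -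
      e (b i - b (i - 1)) * (1 - e (a i - b i)) * (1 - e (a (i + 1) - b i)) with hRdef
  set f : ℤ → R := fun i => e (a (i + 1) - b i) - e (b (i + 1) - b i) with hfdef
  -- pointwise identity
  have hkey : ∀ i : ℤ, L i - Rt i = f i - f (i - 1) := by
    intro i
    have h1 : f (i - 1) = e (a i - b (i - 1)) - e (b i - b (i - 1)) := by
      simp [hfdef, sub_add_cancel]
    rw [h1]
    simp only [hLdef, hRdef, hfdef, hsplit]
    exact keyAlg (e (a i)) (e (a (i + 1))) (e (b i)) (e (b (i + 1)))
      (e (-a i)) (e (-b i)) (e (-b (i - 1))) (hinv (a i)) (hinv (b i))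
  -- finiteness of supports
  have hA1 := shift_finite ha 1
  have hB1 := shift_finite hb 1
  have hBm := shift_finite hb (-1)
  have hBm' : {i : ℤ | b (i - 1) ≠ 0}.Finite := by
    simpa [sub_eq_add_neg] using hBm
  have hU : (({i : ℤ | a i ≠ 0} ∪ {i | a (i + 1) ≠ 0}) ∪
      ({i | b i ≠ 0} ∪ {i | b (i + 1) ≠ 0}) ∪ {i | b (i - 1) ≠ 0}).Finite := by
    exact ((ha.union hA1).union (hb.union hB1)).union hBm'
  have hzero : ∀ i : ℤ, a i = 0 → a (i + 1) = 0 → b i = 0 → b (i + 1) = 0 →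
      b (i - 1) = 0 → L i = 0 ∧ Rt i = 0 ∧ f i = 0 := by
    intro i h1 h2 h3 h4 h5
    simp [hLdef, hRdef, hfdef, h1, h2, h3, h4, h5, he0]
  have hmem : ∀ {g : ℤ → R}, (∀ i, a i = 0 → a (i + 1) = 0 → b i = 0 → b (i + 1) = 0 →
      b (i - 1) = 0 → g i = 0) → (Function.support g).Finite := by
    intro g hg
    refine hU.subset fun i hi => ?_
    by_contra h
    simp only [Set.mem_union, Set.mem_setOf_eq, not_or, not_not] at h
    exact hi (hg i h.1.1.1 h.1.1.2 h.1.2.1 h.1.2.2 h.2)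
  have hLfin : (Function.support L).Finite := hmem fun i h1 h2 h3 h4 h5 => (hzero i h1 h2 h3 h4 h5).1
  have hRfin : (Function.support Rt).Finite := hmem fun i h1 h2 h3 h4 h5 => (hzero i h1 h2 h3 h4 h5).2.1
  have hffin : (Function.support f).Finite := hmem fun i h1 h2 h3 h4 h5 => (hzero i h1 h2 h3 h4 h5).2.2
  have hfsfin : (Function.support fun i => f (i - 1)).Finite := by
    have : (Function.support fun i : ℤ => f (i - 1)) = (fun i : ℤ => i - 1) ⁻¹' Function.support f := rfl
    rw [this]
    exact hffin.preimage (Set.injOn_of_injective (sub_left_injective))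
  have hdiff : ∑ᶠ i : ℤ, (L i - Rt i) = 0 := by
    calc ∑ᶠ i : ℤ, (L i - Rt i) = ∑ᶠ i : ℤ, (f i - f (i - 1)) := by
          exact finsum_congr hkey
      _ = (∑ᶠ i : ℤ, f i) - ∑ᶠ i : ℤ, f (i - 1) := finsum_sub_distrib hffin hfsfin
      _ = 0 := by
          have hcomp : (∑ᶠ i : ℤ, f (i - 1)) = ∑ᶠ i : ℤ, f i :=
            finsum_comp_equiv (Equiv.subRight (1 : ℤ))
          rw [hcomp, sub_self]
  have := finsum_sub_distrib hLfin hRfin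
  rw [hdiff] at this
  exact sub_eq_zero.mp this.symm
end

section
/- For all integers $0 \le i, j \le a$, the identity $\sum_k \binom{i}{k}_q \binom{a-i}{j-k}_q \binom{a+k}{a}_q q^{(i-k)(j-k)} = \binom{a}{j}_q \binom{i+j}{j}_q$ holds in $\mathbb{Z}[q]$, where the sum is over $k$ with $\max(0, i+j-a) \le k \le \min(i,j)$. -/
open Finset

/-- The indeterminate `q`, as a rational function. -/
noncomputable def q : RatFunc ℚ := RatFunc.X

/-- The q-Pochhammer product `(q)_a = ∏_{m=1}^{a} (1 - q^m)`. -/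
noncomputable def qpoch (a : ℕ) : RatFunc ℚ := ∏ m ∈ Finset.range a, (1 - q ^ (m + 1))

/-- The Gaussian binomial coefficient
`[a, b]_q = ∏_{m=1}^a (1-q^m) / (∏_{m=1}^b (1-q^m) ∏_{m=1}^{a-b} (1-q^m))`,
with the convention that it is `0` when `b > a`. -/
noncomputable def gb (a b : ℕ) : RatFunc ℚ :=
  if b ≤ a then qpoch a / (qpoch b * qpoch (a - b)) else 0

lemma one_sub_q_pow_ne_zero (n : ℕ) : (1 - q ^ (n+1)) ≠ 0 := by
  intro h
  have h1 : (q : RatFunc ℚ) ^ (n+1) = 1 := (sub_eq_zero.mp h).symm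
  have h2 : algebraMap (Polynomial ℚ) (RatFunc ℚ) (Polynomial.X ^ (n+1)) =
      algebraMap (Polynomial ℚ) (RatFunc ℚ) 1 := by
    rw [map_pow, map_one]; exact h1
  have h3 : (Polynomial.X : Polynomial ℚ) ^ (n+1) = 1 := RatFunc.algebraMap_injective ℚ h2
  have := congrArg (Polynomial.eval 0) h3
  simp at this

lemma qpoch_ne_zero (a : ℕ) : qpoch a ≠ 0 :=
  Finset.prod_ne_zero_iff.mpr fun m _ => one_sub_q_pow_ne_zero m

lemma qpoch_zero : qpoch 0 = 1 := by simp [qpoch]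

lemma qpoch_succ (a : ℕ) : qpoch (a+1) = qpoch a * (1 - q ^ (a+1)) := Finset.prod_range_succ _ _

lemma gb_zero_right (n : ℕ) : gb n 0 = 1 := by
  simp [gb, qpoch_zero, div_self (qpoch_ne_zero n)]

lemma gb_self (n : ℕ) : gb n n = 1 := by
  simp [gb, qpoch_zero, div_self (qpoch_ne_zero n)]

lemma gb_of_lt {n b : ℕ} (h : n < b) : gb n b = 0 := if_neg (by omega)

lemma gb_expand (x y : ℕ) : gb (x+y) x = qpoch (x+y) / (qpoch x * qpoch y) := by
  rw [gb, if_pos (Nat.le_add_right x y), Nat.add_sub_cancel_left]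

lemma L1 (n b : ℕ) : gb n (b+1) * (1 - q^(b+1)) = gb n b * (1 - q^(n-b)) := by
  rcases le_or_gt (b+1) n with h | h
  · obtain ⟨t, rfl⟩ : ∃ t, n = (b+1) + t := ⟨n - (b+1), by omega⟩
    rw [gb_expand (b+1) t, show (b+1)+t = b + (t+1) from by ring, gb_expand b (t+1),
      show b + (t+1) - b = t + 1 from by omega,
      qpoch_succ b, qpoch_succ t]
    rw [div_mul_eq_mul_div, div_mul_eq_mul_div, div_eq_div_iff (by
      exact mul_ne_zero (mul_ne_zero (qpoch_ne_zero b) (one_sub_q_pow_ne_zero b)) (qpoch_ne_zero t))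
      (mul_ne_zero (qpoch_ne_zero b) (mul_ne_zero (qpoch_ne_zero t) (one_sub_q_pow_ne_zero t)))]
    ring
  · rcases eq_or_lt_of_le (by omega : n ≤ b) with h2 | h2
    · subst h2; rw [gb_of_lt (by omega), Nat.sub_self]; simp
    · rw [gb_of_lt (by omega), gb_of_lt h2]; simp

lemma L2 (n b : ℕ) : gb (n+1) b * (1 - q^(n+1-b)) = gb n b * (1 - q^(n+1)) := by
  rcases le_or_gt b n with h | h
  · obtain ⟨t, rfl⟩ : ∃ t, n = b + t := ⟨n - b, by omega⟩
    have e1 : gb (b+t+1) b = qpoch (b+t) * (1 - q^(b+t+1)) / (qpoch b * (qpoch t * (1-q^(t+1)))) := by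
      rw [show b+t+1 = b + (t+1) from by ring, gb_expand b (t+1), qpoch_succ t,
        show b+(t+1) = (b+t)+1 from by ring, qpoch_succ (b+t)]
    rw [e1, gb_expand b t, show b+t+1-b = t+1 from by omega]
    rw [div_mul_eq_mul_div, div_mul_eq_mul_div, div_eq_div_iff
      (mul_ne_zero (qpoch_ne_zero b) (mul_ne_zero (qpoch_ne_zero t) (one_sub_q_pow_ne_zero t)))
      (mul_ne_zero (qpoch_ne_zero b) (qpoch_ne_zero t))]
    ring
  · rcases eq_or_lt_of_le (by omega : n + 1 ≤ b) with h2 | h2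
    · rw [← h2, Nat.sub_self, gb_of_lt (Nat.lt_succ_self n)]; simp
    · rw [gb_of_lt h, gb_of_lt h2]; simp

lemma L3 (n b : ℕ) : gb (n+1) (b+1) * (1 - q^(b+1)) = gb n b * (1 - q^(n+1)) := by
  rcases le_or_gt b n with h | h
  · obtain ⟨t, rfl⟩ : ∃ t, n = b + t := ⟨n - b, by omega⟩
    have e1 : gb (b+t+1) (b+1) = qpoch (b+t) * (1 - q^(b+t+1)) / (qpoch b * (1-q^(b+1)) * qpoch t) := by
      rw [show b+t+1 = (b+1) + t from by ring, gb_expand (b+1) t, qpoch_succ b,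
        show (b+1)+t = (b+t)+1 from by ring, qpoch_succ (b+t)]
    rw [e1, gb_expand b t]
    rw [div_mul_eq_mul_div, div_mul_eq_mul_div, div_eq_div_iff
      (mul_ne_zero (mul_ne_zero (qpoch_ne_zero b) (one_sub_q_pow_ne_zero b)) (qpoch_ne_zero t))
      (mul_ne_zero (qpoch_ne_zero b) (qpoch_ne_zero t))]
    ring
  · rw [gb_of_lt (by omega), gb_of_lt h]; simp

noncomputable def Tf (a i j k : ℕ) : RatFunc ℚ :=
  gb i k * gb (a-i) (j-k) * gb (a+k) a * q^((i-k)*(j-k))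

noncomputable def Gf (a i j k : ℕ) : RatFunc ℚ :=
  if k ≤ min i j then -(q^(j-k) * (1-q^k)^2 * Tf a i j k) else 0

lemma perk (a i j k : ℕ) (hi : i ≤ a) (hk : k ≤ min i (j+1)) :
    (1-q^(j+1))^2 * Tf a i (j+1) k
      - (1-q^(a-j))*(1-q^(i+j+1)) * (if k ≤ min i j then Tf a i j k else 0)
    = Gf a i (j+1) (k+1) - Gf a i (j+1) k := by
  by_cases hkj : k ≤ j
  · have hki : k ≤ i := le_trans hk (Nat.min_le_left _ _)
    rw [if_pos (le_min hki hkj)]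
    by_cases hd : j - k ≤ a - i
    · have hGk1 : Gf a i (j+1) (k+1) = -(q^(j-k) * (1-q^(k+1))^2 * Tf a i (j+1) (k+1)) := by
        unfold Gf
        rcases le_or_gt (k+1) (min i (j+1)) with h | h
        · rw [if_pos h, show j+1-(k+1) = j-k from by omega]
        · rw [if_neg (by omega)]
          have hik : i < k+1 := by omega
          unfold Tf
          rw [gb_of_lt hik]
          ring
      have hGk : Gf a i (j+1) k = -(q^(j+1-k) * (1-q^k)^2 * Tf a i (j+1) k) := by
        unfold Gf; rw [if_pos hk]
      rw [hGk1, hGk]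
      unfold Tf
      obtain ⟨b, rfl⟩ : ∃ b, i = k + b := ⟨i-k, by omega⟩
      obtain ⟨c, rfl⟩ : ∃ c, j = k + c := ⟨j-k, by omega⟩
      obtain ⟨d, rfl⟩ : ∃ d, a = k+b+c+d := ⟨a-(k+b+c), by omega⟩
      simp only [show k+b-k = b from by omega, show k+c+1-k = c+1 from by omega,
        show k+c-k = c from by omega, show k+b+c+d-(k+b) = c+d from by omega,
        show k+b-(k+1) = b-1 from by omega, show k+c+1-(k+1) = c from by omega,
        show k+b+c+d-(k+c) = b+d from by omega]
      have h1 : gb (c+d) (c+1) = gb (c+d) c * (1 - q^d) / (1 - q^(c+1)) := by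
        rw [eq_div_iff (one_sub_q_pow_ne_zero c)]
        have := L1 (c+d) c
        rwa [show c+d-c = d from by omega] at this
      have h3 : gb (k+b+c+d+(k+1)) (k+b+c+d)
          = gb (k+b+c+d+k) (k+b+c+d) * (1 - q^(k+b+c+d+(k+1))) / (1 - q^(k+1)) := by
        rw [eq_div_iff (one_sub_q_pow_ne_zero k)]
        have := L2 (k+b+c+d+k) (k+b+c+d)
        rwa [show k+b+c+d+k+1-(k+b+c+d) = k+1 from by omega,
          show k+b+c+d+k+1 = k+b+c+d+(k+1) from by omega] at this
      have hc' : (1:RatFunc ℚ) - q*q^c ≠ 0 := by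
        have := one_sub_q_pow_ne_zero c; rwa [pow_succ, mul_comm (q^c) q] at this
      have hk' : (1:RatFunc ℚ) - q*q^k ≠ 0 := by
        have := one_sub_q_pow_ne_zero k; rwa [pow_succ, mul_comm (q^k) q] at this
      rw [h1, h3]
      rcases b with _ | b
      · rw [show k+0 = k from rfl, gb_of_lt (Nat.lt_succ_self k)]
        field_simp [one_sub_q_pow_ne_zero c, one_sub_q_pow_ne_zero k, hc', hk']
        ring
      · have h2 : gb (k+(b+1)) (k+1) = gb (k+(b+1)) k * (1 - q^(b+1)) / (1 - q^(k+1)) := by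
          rw [eq_div_iff (one_sub_q_pow_ne_zero k)]
          have := L1 (k+(b+1)) k
          rwa [show k+(b+1)-k = b+1 from by omega] at this
        rw [h2, show b+1-1 = b from rfl]
        field_simp [one_sub_q_pow_ne_zero c, one_sub_q_pow_ne_zero k, hc', hk']
        ring
    · have z1 : gb (a-i) (j-k) = 0 := gb_of_lt (by omega)
      have z2 : gb (a-i) (j+1-k) = 0 := gb_of_lt (by omega)
      have z3 : gb (a-i) (j+1-(k+1)) = 0 := by
        rw [show j+1-(k+1) = j-k from by omega]; exact z1
      unfold Gf Tf
      split_ifs <;> simp [z1, z2, z3]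
  · have hkj1 : k = j+1 := by omega
    subst hkj1
    rw [if_neg (by omega)]
    have g2 : Gf a i (j+1) (j+1+1) = 0 := by unfold Gf; rw [if_neg (by omega)]
    have g1 : Gf a i (j+1) (j+1) = -(q^0 * (1-q^(j+1))^2 * Tf a i (j+1) (j+1)) := by
      unfold Gf; rw [if_pos hk, Nat.sub_self]
    rw [g1, g2]
    ring

/-- q-Nanjundiah identity: for `0 ≤ i, j ≤ a`,
`∑_k [i,k]_q [a-i,j-k]_q [a+k,a]_q q^{(i-k)(j-k)} = [a,j]_q [i+j,j]_q`.
The sum below runs over `0 ≤ k ≤ min i j`; the terms with `k < i + j - a`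
vanish since then `[a-i, j-k]_q = 0`. -/
theorem stmt_1 (a i j : ℕ) (hi : i ≤ a) (hj : j ≤ a) :
    ∑ k ∈ Finset.range (min i j + 1),
      gb i k * gb (a - i) (j - k) * gb (a + k) a * q ^ ((i - k) * (j - k)) =
    gb a j * gb (i + j) j := by
  induction j with
  | zero =>
    simp [Finset.sum_range_one, gb_zero_right, gb_self]
  | succ j ih =>
    have IH := ih (by omega)
    have gtop : Gf a i (j+1) (min i (j+1) + 1) = 0 := by
      unfold Gf; rw [if_neg (by omega)]
    have g0 : Gf a i (j+1) 0 = 0 := by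
      unfold Gf; simp
    have hsplit : ∑ k ∈ Finset.range (min i (j+1) + 1),
        (if k ≤ min i j then Tf a i j k else 0) = ∑ k ∈ Finset.range (min i j + 1), Tf a i j k := by
      rw [← Finset.sum_subset (Finset.range_subset_range.mpr (by omega : min i j + 1 ≤ min i (j+1) + 1))
        (fun x _ hx => if_neg (by simp at hx; omega))]
      exact Finset.sum_congr rfl fun x hx => if_pos (by simp at hx; omega)
    have hsum2 : (1-q^(j+1))^2 * (∑ k ∈ Finset.range (min i (j+1) + 1), Tf a i (j+1) k)
        = (1-q^(a-j))*(1-q^(i+j+1)) * (gb a j * gb (i+j) j) := by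
      rw [Finset.mul_sum]
      calc ∑ k ∈ Finset.range (min i (j+1) + 1), (1-q^(j+1))^2 * Tf a i (j+1) k
          = ∑ k ∈ Finset.range (min i (j+1) + 1),
              ((1-q^(a-j))*(1-q^(i+j+1)) * (if k ≤ min i j then Tf a i j k else 0)
                + (Gf a i (j+1) (k+1) - Gf a i (j+1) k)) := by
            refine Finset.sum_congr rfl fun k hk => ?_
            have := perk a i j k hi (by simp at hk; omega)
            linear_combination this
        _ = (1-q^(a-j))*(1-q^(i+j+1)) * (∑ k ∈ Finset.range (min i (j+1) + 1),
              (if k ≤ min i j then Tf a i j k else 0))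
              + (Gf a i (j+1) (min i (j+1) + 1) - Gf a i (j+1) 0) := by
            rw [Finset.sum_add_distrib, ← Finset.mul_sum, Finset.sum_range_sub]
        _ = (1-q^(a-j))*(1-q^(i+j+1)) * (gb a j * gb (i+j) j) := by
            rw [gtop, g0, hsplit]
            simp only [Tf]
            rw [IH]; ring
    have e2 : (1-q^(j+1))^2 * (gb a (j+1) * gb (i+(j+1)) (j+1))
        = (1-q^(a-j))*(1-q^(i+j+1)) * (gb a j * gb (i+j) j) := by
      have e3 := L1 a j
      have e4 := L3 (i+j) j
      rw [show i+(j+1) = (i+j)+1 from by ring]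
      linear_combination ((1-q^(j+1)) * gb ((i+j)+1) (j+1)) * e3 + (1 - q^(a-j)) * gb a j * e4
    have hne : ((1-q^(j+1))^2 : RatFunc ℚ) ≠ 0 := pow_ne_zero _ (one_sub_q_pow_ne_zero j)
    apply mul_left_cancel₀ hne
    rw [e2, ← hsum2]
    simp only [Tf]
end

section
/- Define rational numbers $K_\alpha$ for $\alpha = a_1\alpha_1 + a_2\alpha_2$ in the positive root lattice of type $A_2$ by the recursion $\frac{(\alpha,\alpha)}{2} K_\alpha = K_{\alpha-\alpha_1} + K_{\alpha-\alpha_2}$ (with $K_0 = 1$ and $K_\beta = 0$ if $\beta$ has a negative coefficient), where $(\alpha,\alpha)/2 = a_1^2 - a_1a_2 + a_2^2$. Then $K_\alpha = \frac{1}{(a_1!\, a_2!)^2}\binom{a_1+a_2}{a_1}$ for all $(a_1,a_2) \ne (0,0)$ together with $K_0=1$. -/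
noncomputable def Fq (a b : ℕ) : ℚ :=
  ((a + b).choose a : ℚ) / ((a.factorial * b.factorial : ℕ) : ℚ) ^ 2

lemma Fq_fact (a b : ℕ) : Fq a b = ((a+b).factorial : ℚ) /
    (((a.factorial : ℚ))^3 * ((b.factorial : ℚ))^3) := by
  rw [Fq, Nat.cast_choose ℚ (Nat.le_add_right a b)]
  have h : a + b - a = b := by omega
  rw [h]
  have h1 : (a.factorial : ℚ) ≠ 0 := Nat.cast_ne_zero.2 a.factorial_ne_zero
  have h2 : (b.factorial : ℚ) ≠ 0 := Nat.cast_ne_zero.2 b.factorial_ne_zero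
  rw [div_div, div_eq_div_iff (by positivity) (by positivity)]
  push_cast
  ring

lemma key_id (a b : ℕ) (ha : 1 ≤ a) (hb : 1 ≤ b) :
    ((a:ℚ)^2 - a*b + b^2) * Fq a b = Fq (a-1) b + Fq a (b-1) := by
  obtain ⟨a', rfl⟩ : ∃ a', a = a' + 1 := ⟨a - 1, by omega⟩
  obtain ⟨b', rfl⟩ : ∃ b', b = b' + 1 := ⟨b - 1, by omega⟩
  simp only [Nat.add_sub_cancel]
  rw [Fq_fact, Fq_fact, Fq_fact]
  have e1 : (a' + 1) + (b' + 1) = (a' + 1 + b') + 1 := by ring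
  have e2 : a' + (b' + 1) = a' + 1 + b' := by ring
  rw [e1, e2, Nat.factorial_succ (a' + 1 + b'), Nat.factorial_succ a', Nat.factorial_succ b']
  have h1 : (a'.factorial : ℚ) ≠ 0 := Nat.cast_ne_zero.2 a'.factorial_ne_zero
  have h2 : (b'.factorial : ℚ) ≠ 0 := Nat.cast_ne_zero.2 b'.factorial_ne_zero
  have h3 : ((a'+1:ℕ) : ℚ) ≠ 0 := by positivity
  have h4 : ((b'+1:ℕ) : ℚ) ≠ 0 := by positivity
  push_cast
  field_simp
  ring

/-- in type `A₂`, if `K : ℤ × ℤ → ℚ` satisfies `K₀ = 1`,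
`K_β = 0` when `β` has a negative coefficient, and the recursion
`((α,α)/2) K_α = K_{α-α₁} + K_{α-α₂}` for `α = (a₁, a₂) ≠ 0` with nonnegative
coefficients, where `(α,α)/2 = a₁² - a₁a₂ + a₂²`, then
`K_{(a₁,a₂)} = (a₁+a₂ choose a₁) / (a₁! a₂!)²` for all nonnegative `a₁, a₂`
(including `K₀ = 1`). -/
theorem stmt_8 (K : ℤ × ℤ → ℚ)
    (hK0 : K (0, 0) = 1)
    (hneg : ∀ a b : ℤ, a < 0 ∨ b < 0 → K (a, b) = 0)
    (hrec : ∀ a b : ℤ, 0 ≤ a → 0 ≤ b → (a, b) ≠ (0, 0) →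
      ((a ^ 2 - a * b + b ^ 2 : ℤ) : ℚ) * K (a, b) = K (a - 1, b) + K (a, b - 1)) :
    ∀ a₁ a₂ : ℕ,
      K ((a₁ : ℤ), (a₂ : ℤ)) =
        ((a₁ + a₂).choose a₁ : ℚ) / ((a₁.factorial * a₂.factorial : ℕ) : ℚ) ^ 2 := by
  suffices h : ∀ n a b : ℕ, a + b = n → K ((a:ℤ), (b:ℤ)) = Fq a b by
    intro a₁ a₂; exact h (a₁ + a₂) a₁ a₂ rfl
  intro n
  induction n with
  | zero =>
    intro a b hab
    obtain ⟨rfl, rfl⟩ : a = 0 ∧ b = 0 := by omega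
    have : K ((0:ℕ), (0:ℕ)) = K (0,0) := by norm_num
    rw [this, hK0, Fq]
    norm_num
  | succ n ih =>
    intro a b hab
    have hne : ((a:ℤ), (b:ℤ)) ≠ (0, 0) := by
      intro h
      rw [Prod.mk.injEq] at h
      omega
    have hr := hrec a b (by positivity) (by positivity) hne
    have hQ : ((a:ℚ)^2 - a*b + b^2) ≠ 0 := by
      have : 0 < (a:ℚ)^2 - a*b + b^2 := by
        have : a + b = n + 1 := hab
        rcases Nat.eq_zero_or_pos a with h|h
        · subst h; have : 1 ≤ b := by omega
          have : (1:ℚ) ≤ b := by exact_mod_cast this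
          nlinarith
        · have : (1:ℚ) ≤ a := by exact_mod_cast h
          nlinarith [sq_nonneg ((a:ℚ) - b), mul_nonneg (Nat.cast_nonneg a : (0:ℚ) ≤ a) (Nat.cast_nonneg b : (0:ℚ) ≤ b)]
      exact ne_of_gt this
    have hcast : (((a:ℤ) ^ 2 - a * b + b ^ 2 : ℤ) : ℚ) = (a:ℚ)^2 - a*b + b^2 := by push_cast; ring
    rw [hcast] at hr
    -- compute the two shifted terms
    have hleft : K ((a:ℤ) - 1, (b:ℤ)) = if a = 0 then 0 else Fq (a-1) b := by
      rcases Nat.eq_zero_or_pos a with h|h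
      · subst h; simp [hneg (-1) b (Or.inl (by norm_num))]
      · rw [if_neg (by omega)]
        have : ((a:ℤ) - 1) = ((a-1 : ℕ) : ℤ) := by omega
        rw [this]
        exact ih (a-1) b (by omega)
    have hright : K ((a:ℤ), (b:ℤ) - 1) = if b = 0 then 0 else Fq a (b-1) := by
      rcases Nat.eq_zero_or_pos b with h|h
      · subst h; simp [hneg a (-1) (Or.inr (by norm_num))]
      · rw [if_neg (by omega)]
        have : ((b:ℤ) - 1) = ((b-1 : ℕ) : ℤ) := by omega
        rw [this]
        exact ih a (b-1) (by omega)
    rw [hleft, hright] at hr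
    have goal : ((a:ℚ)^2 - a*b + b^2) * Fq a b =
        (if a = 0 then 0 else Fq (a-1) b) + (if b = 0 then 0 else Fq a (b-1)) := by
      rcases Nat.eq_zero_or_pos a with ha|ha
      · subst ha
        have hb : 1 ≤ b := by omega
        rw [if_pos rfl, if_neg (by omega)]
        obtain ⟨b', rfl⟩ : ∃ b', b = b' + 1 := ⟨b - 1, by omega⟩
        simp only [Nat.add_sub_cancel]
        rw [Fq_fact, Fq_fact]
        have h2 : (b'.factorial : ℚ) ≠ 0 := Nat.cast_ne_zero.2 b'.factorial_ne_zero
        have h4 : ((b'+1:ℕ) : ℚ) ≠ 0 := by positivity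
        simp only [Nat.zero_add, Nat.factorial_zero, Nat.factorial_succ]
        push_cast
        field_simp
        ring
      rcases Nat.eq_zero_or_pos b with hb|hb
      · subst hb
        rw [if_pos rfl, if_neg (by omega)]
        obtain ⟨a', rfl⟩ : ∃ a', a = a' + 1 := ⟨a - 1, by omega⟩
        simp only [Nat.add_sub_cancel]
        rw [Fq_fact, Fq_fact]
        have h2 : (a'.factorial : ℚ) ≠ 0 := Nat.cast_ne_zero.2 a'.factorial_ne_zero
        have h4 : ((a'+1:ℕ) : ℚ) ≠ 0 := by positivity
        simp only [Nat.add_zero, Nat.factorial_zero, Nat.factorial_succ]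
        push_cast
        field_simp
        ring
      · rw [if_neg (by omega), if_neg (by omega)]
        exact key_id a b ha hb
    have := hr.trans goal.symm
    exact mul_left_cancel₀ hQ this
end

section
/- For every nonnegative integer $m$, $\sum_{i=0}^m \sum_{j=0}^m \binom{m}{i}^2 \binom{m}{j}^2 \binom{i+j}{i} = \sum_{k=0}^m \binom{m}{k}^2\binom{m+k}{k}^2$, i.e. the left-hand side equals the $m$-th Apéry number. -/
/-!
Diagonal Vandermonde, `C(i+j, i) = ∑ₖ C(i, k) C(j, k)`, turns the double sum into
`∑ₖ (∑ᵢ C(m, i)² C(i, k))²`. Since `C(m, i) C(i, k) = C(m, k) C(m-k, i-k)`, Vandermonde again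
evaluates the inner sum as `C(m, k) C(2m-k, m-k)`, and reflecting `k ↦ m - k` gives the
Apéry summand.
-/

open Finset

namespace Nat

theorem add_choose_eq_sum_range_choose_mul_choose {i j n : ℕ} (hj : j < n) :
    (i + j).choose i = ∑ k ∈ range n, i.choose k * j.choose k := by
  have hvanish : ∀ k ∈ range n, k ∉ range (j + 1) → i.choose k * j.choose k = 0 := by
    intro k _ hk
    rw [choose_eq_zero_of_lt (n := j) (by simpa using hk), mul_zero]
  rw [← sum_subset (range_subset_range.mpr hj) hvanish, choose_symm_add, add_choose_eq,
    Nat.sum_antidiagonal_eq_sum_range_succ (fun a b => i.choose a * j.choose b)]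
  refine sum_congr rfl fun k hk => ?_
  rw [choose_symm (mem_range_succ_iff.mp hk)]

theorem sum_range_choose_mul_choose_mul_choose {n m k : ℕ} (hk : k ≤ n) :
    ∑ i ∈ range (n + 1), n.choose i * m.choose i * i.choose k =
      m.choose k * (m - k + n).choose (n - k) := by
  obtain ⟨l, rfl⟩ := Nat.exists_eq_add_of_le hk
  calc ∑ i ∈ range (k + l + 1), (k + l).choose i * m.choose i * i.choose k
      = ∑ t ∈ range (l + 1), (k + l).choose (k + t) * (m.choose (k + t) * (k + t).choose k) := by
        rw [add_assoc, sum_range_add, sum_eq_zero fun i hi => by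
          rw [choose_eq_zero_of_lt (mem_range.mp hi), mul_zero], zero_add]
        simp only [mul_assoc]
    _ = ∑ t ∈ range (l + 1), m.choose k * ((m - k).choose t * (k + l).choose (l - t)) := by
        refine sum_congr rfl fun t _ => ?_
        rw [choose_mul (le_add_right k t), add_tsub_cancel_left,
          choose_symm_of_eq_add (show k + l = (k + t) + (l - t) by grind)]
        ring
    _ = m.choose k * (m - k + (k + l)).choose l := by
        rw [← mul_sum, add_choose_eq,
          Nat.sum_antidiagonal_eq_sum_range_succ (fun a b => (m - k).choose a * (k + l).choose b)]
    _ = _ := by rw [add_tsub_cancel_left]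

end Nat

theorem Finset.sum_sum_mul_mul_sum_mul_eq_sum_sq {ι κ R : Type*} [CommSemiring R]
    (s : Finset ι) (t : Finset κ) (a : ι → R) (b : ι → κ → R) :
    ∑ i ∈ s, ∑ j ∈ s, a i * a j * ∑ k ∈ t, b i k * b j k =
      ∑ k ∈ t, (∑ i ∈ s, a i * b i k) ^ 2 := by
  simp_rw [sq, Finset.sum_mul_sum, Finset.mul_sum]
  symm
  rw [sum_comm]
  refine sum_congr rfl fun i _ => ?_
  rw [sum_comm]
  exact sum_congr rfl fun j _ => sum_congr rfl fun k _ => by ring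

/-- `∑_{i=0}^m ∑_{j=0}^m (m choose i)² (m choose j)² (i+j choose i)`
equals the `m`-th Apéry number `∑_{k=0}^m (m choose k)² (m+k choose k)²`. -/
theorem stmt_9 (m : ℕ) :
    ∑ i ∈ Finset.range (m + 1), ∑ j ∈ Finset.range (m + 1),
        (m.choose i) ^ 2 * (m.choose j) ^ 2 * (i + j).choose i =
      ∑ k ∈ Finset.range (m + 1), (m.choose k) ^ 2 * ((m + k).choose k) ^ 2 := by
  calc _ = ∑ i ∈ range (m + 1), ∑ j ∈ range (m + 1), (m.choose i) ^ 2 * (m.choose j) ^ 2 *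
          ∑ k ∈ range (m + 1), i.choose k * j.choose k :=
        sum_congr rfl fun i _ => sum_congr rfl fun j hj => by
          rw [Nat.add_choose_eq_sum_range_choose_mul_choose (mem_range.mp hj)]
    _ = ∑ k ∈ range (m + 1), (∑ i ∈ range (m + 1), (m.choose i) ^ 2 * i.choose k) ^ 2 :=
        sum_sum_mul_mul_sum_mul_eq_sum_sq _ _ _ _
    _ = ∑ k ∈ range (m + 1), (m.choose k * (m - k + m).choose (m - k)) ^ 2 :=
        sum_congr rfl fun k hk => by
          rw [← Nat.sum_range_choose_mul_choose_mul_choose (mem_range_succ_iff.mp hk)]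
          simp only [sq]
    _ = _ := by
        rw [← sum_range_reflect]
        refine sum_congr rfl fun k hk => ?_
        have hkm : k ≤ m := mem_range_succ_iff.mp hk
        rw [add_tsub_cancel_right, Nat.sub_sub_self hkm, Nat.choose_symm hkm, add_comm k, mul_pow]
end

section
/- For $n \ge 1$, let $T_n$ be the set of triangular arrays $(m_{k,i})_{1\le i\le k\le n}$ with entries in $\{0,1\}$ satisfying $m_{n,i}=1$ for all $i$ and $m_{k,i}\le m_{k+1,i}, m_{k+1,i+1}$, and for $\underline{m}\in T_n$ let $D(\underline{m}) = \sum_{k=1}^{n-1}\big(\sum_{i=1}^k m_{k,i}^2 - \sum_{i=1}^{k-1} m_{k,i}m_{k,i+1}\big)$. Then $\sum_{\underline{m}\in T_n} q^{D(\underline{m})} = \sum_{j=0}^{n-1} \frac{1}{n}\binom{n}{j}\binom{n}{j+1} q^{n-1-j}$, the $n$-th Narayana polynomial (with valley statistic). -/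
/-!
Column `i` of an array in `T_n` is a step function switching from `0` to `1` at some row
`A i ∈ [i, n]`, and the two monotonicity conditions say exactly that `A (i + 1) ≤ A i + 1`. Hence
arrays correspond to the antitone lists `lᵢ = A (i + 1) - (i + 1)` lying under the staircase
`lᵢ < n - i`. Row `k` contributes to `D` its number of maximal blocks of ones; counting the right
ends of these blocks column by column instead, a block ends in column `i` (in row `A i`) exactly
when `lᵢ = lᵢ₋₁`, so `D = n - 1 - (number of strict descents of l)`.

Splitting staircase lists by their first entry gives a recursion for their descent polynomial, with
solution `∑ⱼ (C(c,j) C(N,j) - C(c,j+1) C(N,j-1)) Xʲ` when the first entry is bounded by `c ≤ N`.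
For `c = N` the coefficients are Narayana numbers, and reflecting the polynomial turns descents
into `D`.
-/


/-- A triangular array `(m_{k,i})_{1 ≤ i ≤ k ≤ n}` with entries in `{0,1}`
satisfying `m_{n,i} = 1` and `m_{k,i} ≤ m_{k+1,i}, m_{k+1,i+1}`, encoded as a
function `ℕ → ℕ → ℕ` that vanishes outside the triangle `1 ≤ i ≤ k ≤ n`. -/
def IsArr (n : ℕ) (m : ℕ → ℕ → ℕ) : Prop :=
  (∀ k i, m k i ≤ 1) ∧
  (∀ i, 1 ≤ i → i ≤ n → m n i = 1) ∧
  (∀ k i, 1 ≤ i → i ≤ k → k ≤ n - 1 → m k i ≤ m (k + 1) i ∧ m k i ≤ m (k + 1) (i + 1)) ∧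
  (∀ k i, ¬(1 ≤ i ∧ i ≤ k ∧ k ≤ n) → m k i = 0)

/-- The statistic `D(m) = ∑_{k=1}^{n-1} (∑_{i=1}^k m_{k,i}² - ∑_{i=1}^{k-1} m_{k,i} m_{k,i+1})`. -/
def Dstat (n : ℕ) (m : ℕ → ℕ → ℕ) : ℕ :=
  ∑ k ∈ Finset.Icc 1 (n - 1),
    ((∑ i ∈ Finset.Icc 1 k, (m k i) ^ 2) - ∑ i ∈ Finset.Icc 1 (k - 1), m k i * m k (i + 1))

namespace NarayanaArrays

open Finset Polynomial

/-- Lists `l` of length `N` with `c ≥ l₀ ≥ l₁ ≥ ⋯` and `lᵢ < N - i`. -/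
def stairLists : ℕ → ℕ → Finset (List ℕ)
  | 0, _ => {[]}
  | N + 1, c => (range (min c N + 1)).biUnion fun h => (stairLists N h).image (h :: ·)

def descents : List ℕ → ℕ
  | a :: b :: t => (if b < a then 1 else 0) + descents (b :: t)
  | _ => 0

theorem cons_mem_stairLists_succ {N c h : ℕ} {t : List ℕ} :
    h :: t ∈ stairLists (N + 1) c ↔ h ≤ min c N ∧ t ∈ stairLists N h := by
  simp [stairLists]

theorem exists_eq_cons_of_mem_stairLists_succ {N c : ℕ} {l : List ℕ}
    (hl : l ∈ stairLists (N + 1) c) : ∃ h t, l = h :: t := by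
  cases l with
  | nil => simp [stairLists] at hl
  | cons h t => exact ⟨h, t, rfl⟩

theorem mem_stairLists {N c : ℕ} {l : List ℕ} :
    l ∈ stairLists N c ↔
      l.length = N ∧ ∀ i < N, l.getD i 0 ≤ (c :: l).getD i 0 ∧ l.getD i 0 + i < N := by
  induction N generalizing c l with
  | zero => simp [stairLists]
  | succ N ih =>
    cases l with
    | nil => simp [stairLists]
    | cons h t =>
      rw [cons_mem_stairLists_succ, ih, Nat.forall_lt_succ_left]
      simp only [List.length_cons, List.getD_cons_zero, List.getD_cons_succ, le_min_iff,
        add_zero, ← add_assoc, Nat.add_right_cancel_iff, Nat.lt_succ_iff]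
      tauto

theorem stairLists_mono {N c c' : ℕ} (h : c ≤ c') : stairLists N c ⊆ stairLists N c' := by
  cases N with
  | zero => exact subset_rfl
  | succ N => exact biUnion_subset_biUnion_of_subset_left _ (range_subset_range.mpr (by omega))

theorem stairLists_succ_min (N c : ℕ) : stairLists (N + 1) (min c N) = stairLists (N + 1) c := by
  simp only [stairLists, min_assoc, min_self]

noncomputable def descentPoly (N c : ℕ) : ℚ[X] :=
  ∑ l ∈ stairLists N c, X ^ descents l

theorem descentPoly_succ_min (N c : ℕ) : descentPoly (N + 1) (min c N) = descentPoly (N + 1) c := by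
  rw [descentPoly, descentPoly, stairLists_succ_min]

theorem descentPoly_succ (N c : ℕ) :
    descentPoly (N + 1) c =
      ∑ h ∈ range (min c N + 1), ∑ t ∈ stairLists N h, X ^ descents (h :: t) := by
  rw [descentPoly, stairLists, sum_biUnion]
  · exact sum_congr rfl fun h _ => sum_image fun _ _ _ _ => List.cons_injective.eq_iff.mp
  · intro a _ b _ hab
    simp only [Function.onFun, disjoint_left, mem_image]
    rintro _ ⟨t, _, rfl⟩ ⟨t', _, heq⟩
    exact hab (List.cons_eq_cons.mp heq).1.symm

theorem sum_descents_zero_cons (N : ℕ) :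
    ∑ t ∈ stairLists (N + 1) 0, X ^ descents (0 :: t) = descentPoly (N + 1) 0 := by
  refine sum_congr rfl fun t ht => ?_
  obtain ⟨b, t, rfl⟩ := exists_eq_cons_of_mem_stairLists_succ ht
  simp [descents]

theorem sum_descents_succ_cons (N h : ℕ) :
    ∑ t ∈ stairLists (N + 1) (h + 1), X ^ descents ((h + 1) :: t) =
      X * descentPoly (N + 1) h + (descentPoly (N + 1) (h + 1) - descentPoly (N + 1) h) := by
  have hsub := stairLists_mono (N := N + 1) (Nat.le_succ h)
  have hplateau : ∀ t ∈ stairLists (N + 1) (h + 1) \ stairLists (N + 1) h,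
      X ^ descents ((h + 1) :: t) = (X : ℚ[X]) ^ descents t := by
    intro t ht
    obtain ⟨ht, hnot⟩ := mem_sdiff.mp ht
    obtain ⟨b, t, rfl⟩ := exists_eq_cons_of_mem_stairLists_succ ht
    rw [cons_mem_stairLists_succ] at ht hnot
    have hb : b = h + 1 := by by_contra; exact hnot ⟨by omega, ht.2⟩
    simp [descents, hb]
  have hdescent : ∀ t ∈ stairLists (N + 1) h,
      X ^ descents ((h + 1) :: t) = X * (X : ℚ[X]) ^ descents t := by
    intro t ht
    obtain ⟨b, t, rfl⟩ := exists_eq_cons_of_mem_stairLists_succ ht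
    rw [cons_mem_stairLists_succ] at ht
    rw [descents, if_pos (by omega), pow_add, pow_one]
  rw [← sum_sdiff hsub, sum_congr rfl hplateau, sum_congr rfl hdescent, ← mul_sum,
    descentPoly, descentPoly, ← sum_sdiff hsub]
  ring

theorem descentPoly_succ_succ (N c : ℕ) :
    descentPoly (N + 2) c =
      X * ∑ h ∈ range (min c (N + 1)), descentPoly (N + 1) h +
        descentPoly (N + 1) (min c (N + 1)) := by
  rw [descentPoly_succ]
  induction min c (N + 1) with
  | zero => simp [sum_descents_zero_cons]
  | succ m ih => rw [sum_range_succ, ih, sum_descents_succ_cons, sum_range_succ]; ring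

def descentCoeff (c N : ℕ) : ℕ → ℚ
  | 0 => 1
  | j + 1 => c.choose (j + 1) * N.choose (j + 1) - c.choose (j + 2) * N.choose j

theorem sum_range_choose_cast (c k : ℕ) : ∑ h ∈ range c, (h.choose k : ℚ) = c.choose (k + 1) := by
  induction c with
  | zero => simp
  | succ c ih => rw [sum_range_succ, ih, Nat.choose_succ_succ']; push_cast; ring

theorem descentCoeff_succ {N c : ℕ} (hc : c ≤ N + 1) (j : ℕ) :
    ∑ h ∈ range c, descentCoeff h N j + descentCoeff (min c N) N (j + 1) =
      descentCoeff c (N + 1) (j + 1) := by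
  rcases hc.lt_or_eq with hc | rfl <;>
    [rw [min_eq_left (Nat.lt_succ_iff.mp hc)]; rw [min_eq_right (Nat.le_succ N)]] <;>
    cases j <;>
    simp only [descentCoeff, sum_const, card_range, sum_sub_distrib, ← sum_mul,
      sum_range_choose_cast, Nat.choose_succ_succ', zero_add, Nat.choose_zero_right,
      Nat.choose_one_right] <;>
    push_cast <;> ring

theorem descentCoeff_eq_zero {c N j : ℕ} (hc : c ≤ N) (hj : N < j) : descentCoeff c N j = 0 := by
  obtain ⟨j, rfl⟩ := Nat.exists_eq_add_of_lt (Nat.zero_lt_of_lt hj)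
  simp [descentCoeff, Nat.choose_eq_zero_of_lt (show N < j + 1 by omega),
    Nat.choose_eq_zero_of_lt (show c < j + 2 by omega)]

theorem coeff_descentPoly {N c : ℕ} (hc : c ≤ N) (j : ℕ) :
    (descentPoly (N + 1) c).coeff j = descentCoeff c N j := by
  induction N generalizing c j with
  | zero =>
    obtain rfl : c = 0 := Nat.le_zero.mp hc
    cases j <;> simp [descentPoly, stairLists, descents, descentCoeff, coeff_one]
  | succ N ih =>
    rw [descentPoly_succ_succ, min_eq_left hc, ← descentPoly_succ_min]
    cases j with
    | zero => simp [ih (min_le_right c N), descentCoeff]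
    | succ j =>
      rw [coeff_add, coeff_X_mul, finsetSum_coeff, ih (min_le_right c N),
        sum_congr rfl fun h hh => ih (by simp at hh; omega) j]
      exact descentCoeff_succ hc j

theorem descentPoly_eq_sum (N : ℕ) :
    descentPoly (N + 1) N = ∑ j ∈ range (N + 1), C (descentCoeff N N j) * X ^ j := by
  ext j
  simp only [coeff_descentPoly le_rfl, finsetSum_coeff, coeff_C_mul_X_pow, sum_ite_eq, mem_range]
  split_ifs with hj
  · rfl
  · exact descentCoeff_eq_zero le_rfl (by omega)

theorem descentCoeff_self (m j : ℕ) :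
    descentCoeff m m j = (m + 1).choose j * (m + 1).choose (j + 1) / (m + 1) := by
  have hm : (m : ℚ) + 1 ≠ 0 := by positivity
  cases j with
  | zero => field_simp; simp [descentCoeff]
  | succ j =>
    rcases lt_or_ge m (j + 1) with hj | hj
    · simp [descentCoeff, Nat.choose_eq_zero_of_lt hj,
        Nat.choose_eq_zero_of_lt (hj.trans (Nat.lt_succ_self _)),
        Nat.choose_eq_zero_of_lt (show m + 1 < j + 2 by omega)]
    have hmj : (0 : ℚ) < m - j := by
      rw [sub_pos]; exact_mod_cast (show j < m by omega)
    have h₁ : (m.choose (j + 2) : ℚ) = m.choose (j + 1) * (m - j - 1) / (j + 2) := by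
      rw [eq_div_iff (by positivity)]
      have := Nat.choose_succ_right_eq m (j + 1)
      rw [← Nat.cast_inj (R := ℚ), Nat.cast_mul, Nat.cast_mul, Nat.cast_sub hj] at this
      push_cast at this; linear_combination this
    have h₂ : (m.choose j : ℚ) = m.choose (j + 1) * (j + 1) / (m - j) := by
      rw [eq_div_iff hmj.ne']
      have := Nat.choose_succ_right_eq m j
      rw [← Nat.cast_inj (R := ℚ), Nat.cast_mul, Nat.cast_mul, Nat.cast_sub (by omega)] at this
      push_cast at this; linear_combination -this
    have h₃ : ((m + 1).choose (j + 1) : ℚ) = (m + 1) * m.choose j / (j + 1) := by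
      rw [eq_div_iff (by positivity)]
      exact_mod_cast (Nat.add_one_mul_choose_eq m j).symm
    have h₄ : ((m + 1).choose (j + 2) : ℚ) = (m + 1) * m.choose (j + 1) / (j + 2) := by
      rw [eq_div_iff (by positivity)]
      exact_mod_cast (Nat.add_one_mul_choose_eq m (j + 1)).symm
    simp only [descentCoeff]
    rw [h₁, h₃, h₄, h₂]
    field_simp
    ring

/-- Column `i` of `toArray n l` is `0` above row `l[i-1] + i` and `1` from there down to row `n`. -/
def toArray (n : ℕ) (l : List ℕ) (k i : ℕ) : ℕ :=
  if 1 ≤ i ∧ k ≤ n ∧ l.getD (i - 1) 0 + i ≤ k then 1 else 0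

section
variable {n c : ℕ} {l : List ℕ}

theorem getD_succ_le_of_mem_stairLists (hl : l ∈ stairLists n c) {i : ℕ} (hi : i + 1 < n) :
    l.getD (i + 1) 0 ≤ l.getD i 0 := by
  simpa using ((mem_stairLists.mp hl).2 (i + 1) hi).1

theorem getD_add_lt_of_mem_stairLists (hl : l ∈ stairLists n c) {i : ℕ} (hi : i < n) :
    l.getD i 0 + i < n :=
  ((mem_stairLists.mp hl).2 i hi).2

theorem toArray_isArr (hl : l ∈ stairLists n c) : IsArr n (toArray n l) := by
  refine ⟨fun k i => ?_, fun i h1 h2 => ?_, fun k i h1 h2 h3 => ⟨?_, ?_⟩, fun k i h => ?_⟩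
  all_goals unfold toArray
  · split <;> omega
  · have := getD_add_lt_of_mem_stairLists hl (i := i - 1) (by omega)
    rw [if_pos (by omega)]
  · split_ifs <;> omega
  · obtain ⟨i, rfl⟩ : ∃ i', i = i' + 1 := ⟨i - 1, by omega⟩
    have := getD_succ_le_of_mem_stairLists hl (i := i) (by omega)
    simp only [Nat.add_sub_cancel]
    split_ifs <;> omega
  · rw [if_neg (by omega)]

theorem toArray_eq_one_iff {k i : ℕ} (hk : k ≤ n) :
    toArray n l k (i + 1) = 1 ↔ l.getD i 0 + i + 1 ≤ k := by
  simp only [toArray, Nat.add_sub_cancel]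
  split_ifs <;> simp only [true_iff, false_iff, not_le] <;> omega

theorem injOn_toArray : Set.InjOn (toArray n) (stairLists n c) := by
  intro l₁ h₁ l₂ h₂ heq
  have hlen₁ := (mem_stairLists.mp h₁).1
  have hlen₂ := (mem_stairLists.mp h₂).1
  refine List.ext_getElem (hlen₁.trans hlen₂.symm) fun i hi₁ hi₂ => ?_
  rw [← List.getD_eq_getElem _ 0 hi₁, ← List.getD_eq_getElem _ 0 hi₂]
  have hswitch : ∀ k ≤ n, l₁.getD i 0 + i + 1 ≤ k ↔ l₂.getD i 0 + i + 1 ≤ k := fun k hk => by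
    rw [← toArray_eq_one_iff hk, ← toArray_eq_one_iff hk, heq]
  have h₁ := hswitch _ (getD_add_lt_of_mem_stairLists h₁ (i := i) (by omega))
  have h₂ := hswitch _ (getD_add_lt_of_mem_stairLists h₂ (i := i) (by omega))
  omega

end

theorem exists_threshold {f : ℕ → ℕ} {a n : ℕ} (h01 : ∀ k, f k ≤ 1) (hn : f n = 1)
    (hlow : ∀ k < a, f k = 0) (hmono : ∀ k, a ≤ k → k < n → f k ≤ f (k + 1)) :
    ∃ A, a ≤ A ∧ A ≤ n ∧ ∀ k ≤ n, f k = if A ≤ k then 1 else 0 := by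
  classical
  have hex : ∃ k, f k = 1 := ⟨n, hn⟩
  have haA : a ≤ Nat.find hex := by
    by_contra h
    have := Nat.find_spec hex
    rw [hlow _ (by omega)] at this
    exact zero_ne_one this
  refine ⟨Nat.find hex, haA, Nat.find_min' hex hn, fun k hk => ?_⟩
  split_ifs with hAk
  · induction k, hAk using Nat.le_induction with
    | base => exact Nat.find_spec hex
    | succ k hAk ih =>
      have := hmono k (haA.trans hAk) (by omega)
      have := h01 (k + 1)
      have := ih (by omega)
      omega
  · have := Nat.find_min hex (not_le.mp hAk)
    have := h01 k
    omega

theorem exists_toArray_eq {n : ℕ} {m : ℕ → ℕ → ℕ} (hm : IsArr n m) :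
    ∃ l ∈ stairLists n (n - 1), toArray n l = m := by
  obtain ⟨h01, hrow, hmono, hzero⟩ := hm
  have hcol : ∀ i, ∃ A, 1 ≤ i → i ≤ n →
      i ≤ A ∧ A ≤ n ∧ ∀ k ≤ n, m k i = if A ≤ k then 1 else 0 := by
    intro i
    by_cases hi : 1 ≤ i ∧ i ≤ n
    · obtain ⟨A, hA⟩ := exists_threshold (f := (m · i)) (fun k => h01 k i) (hrow i hi.1 hi.2)
        (fun k hk => hzero k i (by omega)) (fun k hik hkn => (hmono k i hi.1 hik (by omega)).1)
      exact ⟨A, fun _ _ => hA⟩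
    · exact ⟨0, fun h₁ h₂ => absurd ⟨h₁, h₂⟩ hi⟩
  choose A hA using hcol
  have hstep : ∀ i, 1 ≤ i → i < n → A (i + 1) ≤ A i + 1 := by
    intro i h₁ h₂
    obtain ⟨hiA, hAn, hmA⟩ := hA i h₁ h₂.le
    obtain ⟨-, hAn', hmA'⟩ := hA (i + 1) (by omega) h₂
    by_contra hlt
    have hdiag := (hmono (A i) i h₁ hiA (by omega)).2
    rw [hmA _ hAn, hmA' _ (by omega), if_pos le_rfl, if_neg (by omega)] at hdiag
    omega
  have hgetD : ∀ i < n, ((List.range n).map fun i => A (i + 1) - (i + 1)).getD i 0 =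
      A (i + 1) - (i + 1) := fun i hi => by
    simp [List.getD_eq_getElem?_getD, hi]
  refine ⟨(List.range n).map fun i => A (i + 1) - (i + 1), mem_stairLists.mpr ⟨by simp, ?_⟩, ?_⟩
  · intro i hi
    obtain ⟨hiA, hAn, -⟩ := hA (i + 1) (by omega) (by omega)
    rw [hgetD i hi]
    cases i with
    | zero => rw [List.getD_cons_zero]; omega
    | succ i =>
      have := hstep (i + 1) (by omega) hi
      have := (hA (i + 1) (by omega) (by omega)).1
      rw [List.getD_cons_succ, hgetD i (by omega)]
      omega
  · funext k i
    unfold toArray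
    by_cases hin : 1 ≤ i ∧ i ≤ n ∧ k ≤ n
    · obtain ⟨hiA, -, hmA⟩ := hA i hin.1 hin.2.1
      rw [hgetD (i - 1) (by omega), Nat.sub_add_cancel hin.1, hmA k hin.2.2]
      exact if_congr (by omega) rfl rfl
    · rw [if_neg (by omega), hzero k i (by omega)]

theorem descents_eq_sum :
    ∀ l : List ℕ,
      descents l = ∑ i ∈ range (l.length - 1), if l.getD (i + 1) 0 < l.getD i 0 then 1 else 0
  | [] => rfl
  | [_] => rfl
  | a :: b :: t => by
    rw [descents, descents_eq_sum (b :: t)]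
    simp only [List.length_cons, Nat.add_sub_cancel, sum_range_succ' _ (t.length),
      List.getD_cons_succ, List.getD_cons_zero]
    exact add_comm _ _

theorem sum_sq_sub_sum_mul_succ {f : ℕ → ℕ} (h01 : ∀ i, f i ≤ 1) {k : ℕ} (hk : f (k + 1) = 0) :
    (∑ i ∈ Icc 1 k, f i ^ 2) - ∑ i ∈ Icc 1 (k - 1), f i * f (i + 1) =
      ∑ i ∈ Icc 1 k, f i * (1 - f (i + 1)) := by
  have hsplit : ∀ i, f i ^ 2 = f i * f (i + 1) + f i * (1 - f (i + 1)) := fun i => by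
    have := h01 i
    rw [← mul_add, Nat.add_sub_cancel' (h01 _)]
    interval_cases f i <;> rfl
  have hlast : ∑ i ∈ Icc 1 (k - 1), f i * f (i + 1) = ∑ i ∈ Icc 1 k, f i * f (i + 1) :=
    sum_subset (Icc_subset_Icc_right (Nat.sub_le k 1)) fun i hi hi' => by
      obtain rfl : i = k := by simp only [mem_Icc] at hi hi'; omega
      rw [hk, mul_zero]
  rw [sum_congr rfl fun i _ => hsplit i, sum_add_distrib, hlast, Nat.add_sub_cancel_left]

section
variable {n c : ℕ} {l : List ℕ}

theorem sum_toArray_mul_one_sub (hl : l ∈ stairLists n c) {i : ℕ} (hi₁ : 1 ≤ i) (hi : i < n) :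
    ∑ k ∈ Icc 1 (n - 1), toArray n l k i * (1 - toArray n l k (i + 1)) =
      if l.getD i 0 = l.getD (i - 1) 0 then 1 else 0 := by
  have hbound := getD_add_lt_of_mem_stairLists hl hi
  have hanti := getD_succ_le_of_mem_stairLists hl (i := i - 1) (by omega)
  rw [Nat.sub_add_cancel hi₁] at hanti
  have hterm : ∀ k ∈ Icc 1 (n - 1), toArray n l k i * (1 - toArray n l k (i + 1)) =
      if k = l.getD (i - 1) 0 + i ∧ l.getD i 0 = l.getD (i - 1) 0 then 1 else 0 := by
    intro k hk
    simp only [mem_Icc] at hk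
    simp only [toArray, Nat.add_sub_cancel]
    split_ifs <;> omega
  rw [sum_congr rfl hterm]
  split_ifs with heq
  · simp only [heq, and_true, sum_ite_eq', mem_Icc]
    rw [if_pos (by omega)]
  · exact sum_eq_zero fun k _ => if_neg fun h => heq h.2

theorem dstat_toArray_add_descents (hl : l ∈ stairLists n c) :
    Dstat n (toArray n l) + descents l = n - 1 := by
  obtain ⟨h01, -, -, hzero⟩ := toArray_isArr hl
  have hrow : ∀ k ∈ Icc 1 (n - 1),
      (∑ i ∈ Icc 1 k, toArray n l k i ^ 2) -
          ∑ i ∈ Icc 1 (k - 1), toArray n l k i * toArray n l k (i + 1) =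
        ∑ i ∈ Icc 1 (n - 1), toArray n l k i * (1 - toArray n l k (i + 1)) := by
    intro k hk
    simp only [mem_Icc] at hk
    rw [sum_sq_sub_sum_mul_succ (h01 k) (hzero k (k + 1) (by omega))]
    refine sum_subset (Icc_subset_Icc_right hk.2) fun i hi hik => ?_
    simp only [mem_Icc] at hi hik
    rw [hzero k i (by omega), zero_mul]
  have hcol : ∀ i ∈ Icc 1 (n - 1),
      ∑ k ∈ Icc 1 (n - 1), toArray n l k i * (1 - toArray n l k (i + 1)) =
        if l.getD i 0 = l.getD (i - 1) 0 then 1 else 0 := fun i hi => by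
    simp only [mem_Icc] at hi
    exact sum_toArray_mul_one_sub hl hi.1 (by omega)
  rw [Dstat, sum_congr rfl hrow, sum_comm, sum_congr rfl hcol, descents_eq_sum,
    (mem_stairLists.mp hl).1, ← Ico_add_one_right_eq_Icc, sum_Ico_eq_sum_range, Nat.add_sub_cancel,
    ← sum_add_distrib]
  -- consecutive entries of an antitone list are either equal or a strict descent
  have hone : ∀ i ∈ range (n - 1), ((if l.getD (1 + i) 0 = l.getD (1 + i - 1) 0 then 1 else 0) +
      if l.getD (i + 1) 0 < l.getD i 0 then 1 else 0) = 1 := fun i hi => by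
    have := getD_succ_le_of_mem_stairLists hl (i := i) (by simp at hi; omega)
    rw [add_comm 1 i, Nat.add_sub_cancel]
    split_ifs <;> omega
  rw [sum_congr rfl hone, sum_const, card_range, smul_eq_mul, mul_one]

end

theorem image_toArray (n : ℕ) : toArray n '' stairLists n (n - 1) = {m | IsArr n m} := by
  ext m
  constructor
  · rintro ⟨l, hl, rfl⟩
    exact toArray_isArr hl
  · intro hm
    obtain ⟨l, hl, rfl⟩ := exists_toArray_eq hm
    exact ⟨l, hl, rfl⟩

theorem reflect_finsetSum {R ι : Type*} [Semiring R] (N : ℕ) (s : Finset ι) (f : ι → R[X]) :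
    reflect N (∑ i ∈ s, f i) = ∑ i ∈ s, reflect N (f i) :=
  map_sum (⟨⟨reflect N, reflect_zero⟩, fun f g => reflect_add f g N⟩ : R[X] →+ R[X]) f s

theorem sum_pow_dstat (N : ℕ) :
    ∑ᶠ m ∈ {m : ℕ → ℕ → ℕ | IsArr (N + 1) m}, (X : ℚ[X]) ^ Dstat (N + 1) m =
      ∑ j ∈ range (N + 1), C (descentCoeff N N j) * X ^ (N - j) := by
  have hD : ∀ l ∈ stairLists (N + 1) N,
      (X : ℚ[X]) ^ Dstat (N + 1) (toArray (N + 1) l) = reflect N (X ^ descents l) := fun l hl => by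
    have := dstat_toArray_add_descents hl
    rw [reflect_monomial, revAt_le (by omega)]
    congr 1
    omega
  rw [← image_toArray, finsum_mem_image injOn_toArray, finsum_mem_coe_finset, Nat.add_sub_cancel,
    sum_congr rfl hD, ← reflect_finsetSum, ← descentPoly, descentPoly_eq_sum, reflect_finsetSum]
  refine sum_congr rfl fun j hj => ?_
  rw [reflect_C_mul_X_pow, revAt_le (Nat.lt_succ_iff.mp (mem_range.mp hj))]

end NarayanaArrays

/-- for `n ≥ 1`, `∑_{m ∈ T_n} q^{D(m)}` is the `n`-th Narayana
polynomial `∑_{j=0}^{n-1} (1/n)(n choose j)(n choose j+1) q^{n-1-j}`. -/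
theorem stmt_11 (n : ℕ) (hn : 1 ≤ n) :
    (∑ᶠ m ∈ {m : ℕ → ℕ → ℕ | IsArr n m}, (Polynomial.X : Polynomial ℚ) ^ Dstat n m) =
      ∑ j ∈ Finset.range n,
        Polynomial.C ((n.choose j * n.choose (j + 1) : ℚ) / n) *
          (Polynomial.X : Polynomial ℚ) ^ (n - 1 - j) := by
  obtain ⟨N, rfl⟩ := Nat.exists_eq_add_of_le' hn
  rw [NarayanaArrays.sum_pow_dstat, Nat.add_sub_cancel]
  refine Finset.sum_congr rfl fun j _ => ?_
  rw [NarayanaArrays.descentCoeff_self]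
  push_cast
  rfl
end

section
/- Let $\mathfrak{J}_\alpha \in \mathbb{Q}(q)$ for $\alpha$ in the positive root lattice of type $A_n$ be defined by the fermionic recursion $\mathfrak{J}_0 = 1$, $\mathfrak{J}_\alpha = \sum_{0\le\beta\le\alpha} \frac{q^{(\beta,\beta)/2}}{(q)_{\alpha-\beta}}\mathfrak{J}_\beta$. Then $\mathfrak{J}_\alpha$ satisfies the Toda recursion: for $\alpha = \sum_{i=1}^n a_i\alpha_i \ne 0$, $\big(\sum_{i=0}^n (q^{a_{i+1}-a_i}-1)\big)\mathfrak{J}_\alpha = \sum_{i=1}^n q^{a_{i+1}-a_i}\mathfrak{J}_{\alpha-\alpha_i}$, with conventions $a_0 = a_{n+1} = 0$ and $\mathfrak{J}_\beta = 0$ if $\beta$ has a negative coefficient. -/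
open Finset

/-- One-indexed extension by zero: `ext n a k = a_k` for `1 ≤ k ≤ n`, and `0` otherwise. -/
def ext (n : ℕ) (a : Fin n → ℕ) (k : ℕ) : ℕ :=
  if h : 1 ≤ k ∧ k ≤ n then a ⟨k - 1, by omega⟩ else 0

/-- In type `A_n`, `(β,β)/2 = ∑ᵢ bᵢ² - ∑ᵢ bᵢ bᵢ₊₁` (the truncated natural
subtraction is exact here). -/
def pairA (n : ℕ) (b : Fin n → ℕ) : ℕ :=
  (∑ k ∈ Finset.range n, ext n b (k + 1) ^ 2) -
    ∑ k ∈ Finset.range n, ext n b (k + 1) * ext n b (k + 2)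

/-- `(q)_γ = ∏ᵢ ∏_{j=1}^{cᵢ} (1 - qʲ)` in type `A_n`. -/
noncomputable def qpochA (n : ℕ) (γ : Fin n → ℕ) : RatFunc ℚ := ∏ i, qpoch (γ i)

namespace Stmt13

lemma q_ne_zero : q ≠ 0 := RatFunc.X_ne_zero

lemma q_pow_ne_one {k : ℕ} (hk : k ≠ 0) : q ^ k ≠ 1 := by
  intro h
  have : (algebraMap (Polynomial ℚ) (RatFunc ℚ)) (Polynomial.X ^ k) =
      (algebraMap (Polynomial ℚ) (RatFunc ℚ)) 1 := by
    simpa [q, map_pow, RatFunc.algebraMap_X] using h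
  have h2 := RatFunc.algebraMap_injective ℚ this
  have := congrArg Polynomial.natDegree h2
  simp [Polynomial.natDegree_X_pow] at this
  exact hk this

lemma one_sub_q_pow_ne_zero {k : ℕ} (hk : k ≠ 0) : 1 - q ^ k ≠ 0 := by
  intro h
  exact q_pow_ne_one hk (by linear_combination -h)

lemma qpoch_ne_zero (m : ℕ) : qpoch m ≠ 0 := by
  refine Finset.prod_ne_zero_iff.2 fun j _ => ?_
  intro h
  exact one_sub_q_pow_ne_zero (k := j + 1) (by omega) (by linear_combination h)

lemma qpoch_succ (m : ℕ) : qpoch (m + 1) = qpoch m * (1 - q ^ (m + 1)) :=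
  Finset.prod_range_succ _ m

lemma qpochA_ne_zero (n : ℕ) (γ : Fin n → ℕ) : qpochA n γ ≠ 0 :=
  Finset.prod_ne_zero_iff.2 fun i _ => qpoch_ne_zero (γ i)

lemma ext_zero (n : ℕ) (a : Fin n → ℕ) : ext n a 0 = 0 := by simp [_root_.ext]
lemma ext_of_gt (n : ℕ) (a : Fin n → ℕ) {k : ℕ} (h : n < k) : ext n a k = 0 := by
  simp only [_root_.ext, dif_neg (by omega : ¬(1 ≤ k ∧ k ≤ n))]
lemma ext_succ (n : ℕ) (a : Fin n → ℕ) (i : Fin n) : ext n a ((i : ℕ) + 1) = a i := by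
  have hi : (i : ℕ) < n := i.isLt
  simp only [_root_.ext, dif_pos (by omega : 1 ≤ (i : ℕ) + 1 ∧ (i : ℕ) + 1 ≤ n)]
  congr 1

lemma nat_amgm (x y : ℕ) : 2 * (x * y) ≤ x ^ 2 + y ^ 2 := by
  have h : (2 * (x * y) : ℤ) ≤ (x : ℤ) ^ 2 + (y : ℤ) ^ 2 := by nlinarith [sq_nonneg ((x : ℤ) - y)]
  exact_mod_cast h

lemma shift_sq (n : ℕ) (b : Fin n → ℕ) :
    (∑ k ∈ range n, ext n b (k + 2) ^ 2) + ext n b 1 ^ 2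
      = (∑ k ∈ range n, ext n b (k + 1) ^ 2) + ext n b (n + 1) ^ 2 := by
  have h1 : ∑ k ∈ range (n + 1), ext n b (k + 1) ^ 2
      = (∑ k ∈ range n, ext n b (k + 2) ^ 2) + ext n b 1 ^ 2 :=
    Finset.sum_range_succ' (fun k => ext n b (k + 1) ^ 2) n
  have h2 : ∑ k ∈ range (n + 1), ext n b (k + 1) ^ 2
      = (∑ k ∈ range n, ext n b (k + 1) ^ 2) + ext n b (n + 1) ^ 2 :=
    Finset.sum_range_succ (fun k => ext n b (k + 1) ^ 2) n
  omega

lemma sum_prod_le_sum_sq (n : ℕ) (b : Fin n → ℕ) :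
    (∑ k ∈ range n, ext n b (k + 1) * ext n b (k + 2))
      ≤ ∑ k ∈ range n, ext n b (k + 1) ^ 2 := by
  have h1 : 2 * ∑ k ∈ range n, ext n b (k + 1) * ext n b (k + 2)
      ≤ (∑ k ∈ range n, ext n b (k + 1) ^ 2) + ∑ k ∈ range n, ext n b (k + 2) ^ 2 := by
    rw [Finset.mul_sum, ← Finset.sum_add_distrib]
    exact Finset.sum_le_sum fun k _ => nat_amgm _ _
  have h2 := shift_sq n b
  have h3 : ext n b (n + 1) ^ 2 = 0 := by rw [ext_of_gt n b (by omega : n < n + 1)]; ring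
  omega

lemma pairA_cast (n : ℕ) (b : Fin n → ℕ) :
    (pairA n b : ℤ) = (∑ k ∈ range n, (ext n b (k + 1) : ℤ) ^ 2) -
      ∑ k ∈ range n, (ext n b (k + 1) : ℤ) * ext n b (k + 2) := by
  rw [pairA, Nat.cast_sub (sum_prod_le_sum_sq n b)]
  push_cast
  ring

lemma pairA_pos {n : ℕ} {b : Fin n → ℕ} (hb : b ≠ 0) : 1 ≤ pairA n b := by
  by_contra hcon
  have h0 : pairA n b = 0 := by omega
  have hle := sum_prod_le_sum_sq n b
  have hge : (∑ k ∈ range n, ext n b (k + 1) ^ 2)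
      ≤ ∑ k ∈ range n, ext n b (k + 1) * ext n b (k + 2) := by
    unfold pairA at h0; omega
  have heq : (∑ k ∈ range n, (ext n b (k + 1) : ℤ) ^ 2)
      = ∑ k ∈ range n, (ext n b (k + 1) : ℤ) * ext n b (k + 2) := by
    exact_mod_cast congrArg (Nat.cast (R := ℤ)) (le_antisymm hge hle)
  set E : ℕ → ℤ := fun k => (ext n b k : ℤ) with hE
  have hsplit : ∑ k ∈ range n, (E (k + 1) - E (k + 2)) ^ 2
      = (∑ k ∈ range n, E (k + 1) ^ 2) + (∑ k ∈ range n, E (k + 2) ^ 2)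
        - 2 * ∑ k ∈ range n, E (k + 1) * E (k + 2) := by
    rw [Finset.mul_sum, ← Finset.sum_add_distrib, ← Finset.sum_sub_distrib]
    exact Finset.sum_congr rfl fun k _ => by ring
  have hshift : (∑ k ∈ range n, E (k + 2) ^ 2) + E 1 ^ 2
      = (∑ k ∈ range n, E (k + 1) ^ 2) + E (n + 1) ^ 2 := by
    have := shift_sq n b
    have : ((∑ k ∈ range n, ext n b (k + 2) ^ 2) + ext n b 1 ^ 2 : ℤ)
        = ((∑ k ∈ range n, ext n b (k + 1) ^ 2) + ext n b (n + 1) ^ 2 : ℤ) := by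
      exact_mod_cast congrArg (Nat.cast (R := ℤ)) this
    push_cast at this ⊢
    convert this using 2
  have hEn : E (n + 1) = 0 := by simp [hE, ext_of_gt n b (by omega : n < n + 1)]
  have hkey : (∑ k ∈ range n, (E (k + 1) - E (k + 2)) ^ 2) + E 1 ^ 2 = 0 := by
    rw [hsplit]
    have : (∑ k ∈ range n, E (k + 1) ^ 2) = ∑ k ∈ range n, E (k + 1) * E (k + 2) := heq
    rw [hEn] at hshift
    linarith [hshift, this]
  have hnn : ∀ k ∈ range n, (0 : ℤ) ≤ (E (k + 1) - E (k + 2)) ^ 2 := fun _ _ => sq_nonneg _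
  have hsum0 : ∑ k ∈ range n, (E (k + 1) - E (k + 2)) ^ 2 = 0 := by
    nlinarith [Finset.sum_nonneg hnn, sq_nonneg (E 1)]
  have hE1 : E 1 = 0 := by
    have : E 1 ^ 2 = 0 := by linarith
    exact pow_eq_zero_iff (by norm_num) |>.1 this
  have hterm : ∀ k ∈ range n, E (k + 1) = E (k + 2) := by
    intro k hk
    have := (Finset.sum_eq_zero_iff_of_nonneg hnn).1 hsum0 k hk
    have := pow_eq_zero_iff (n := 2) (by norm_num) |>.1 this
    linarith [sub_eq_zero.1 this]
  have hall : ∀ k, E (k + 1) = 0 := by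
    intro k
    induction k with
    | zero => exact hE1
    | succ m ih =>
      by_cases hm : m < n
      · rw [← hterm m (Finset.mem_range.2 hm)]; exact ih
      · simp [hE, ext_of_gt n b (by omega : n < m + 1 + 1)]
  exact hb (funext fun i => by
    have := hall (i : ℕ)
    rw [hE] at this
    simp only [ext_succ] at this
    exact_mod_cast this)

lemma ext_add (n : ℕ) (c : Fin n → ℕ) (i : Fin n) (m : ℕ) :
    ext n (fun j => c j + if j = i then 1 else 0) m
      = ext n c m + (if m = (i : ℕ) + 1 then 1 else 0) := by
  unfold _root_.ext
  by_cases h : 1 ≤ m ∧ m ≤ n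
  · rw [dif_pos h, dif_pos h]
    have hiff : ((⟨m - 1, by omega⟩ : Fin n) = i) ↔ m = (i : ℕ) + 1 := by
      constructor
      · intro hh
        have h2 := congrArg Fin.val hh
        simp only [Fin.val_mk] at h2
        omega
      · intro hh
        apply Fin.ext
        simp only [Fin.val_mk]
        omega
    show c ⟨m - 1, by omega⟩ + (if (⟨m - 1, by omega⟩ : Fin n) = i then 1 else 0)
      = c ⟨m - 1, by omega⟩ + (if m = (i : ℕ) + 1 then 1 else 0)
    by_cases hm : m = (i : ℕ) + 1
    · rw [if_pos hm, if_pos (hiff.2 hm)]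
    · rw [if_neg hm, if_neg (fun hh => hm (hiff.1 hh))]
  · have : m ≠ (i : ℕ) + 1 := by have := i.isLt; omega
    rw [dif_neg h, dif_neg h, if_neg this]

lemma pairA_add_delta (n : ℕ) (c : Fin n → ℕ) (i : Fin n) :
    (pairA n (fun j => c j + if j = i then 1 else 0) : ℤ) =
      (pairA n c : ℤ) + 2 * c i + 1 - ext n c i - ext n c ((i : ℕ) + 2) := by
  set b : Fin n → ℕ := fun j => c j + if j = i then 1 else 0 with hbdef
  have hb : ∀ m, (ext n b m : ℤ)
      = (ext n c m : ℤ) + (if m = (i : ℕ) + 1 then 1 else 0) := by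
    intro m
    rw [hbdef, ext_add n c i m]
    push_cast
    split_ifs <;> simp
  have hSq : ∑ k ∈ range n, (ext n b (k + 1) : ℤ) ^ 2
      = (∑ k ∈ range n, (ext n c (k + 1) : ℤ) ^ 2) + (2 * c i + 1) := by
    have h1 : ∀ k ∈ range n, (ext n b (k + 1) : ℤ) ^ 2
        = (ext n c (k + 1) : ℤ) ^ 2 + (if k = (i : ℕ) then 2 * (c i : ℤ) + 1 else 0) := by
      intro k hk
      rw [hb (k + 1)]
      by_cases hki : k = (i : ℕ)
      · subst hki
        rw [if_pos rfl, if_pos rfl, ext_succ n c i]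
        ring
      · rw [if_neg (by omega), if_neg hki]
        ring
    rw [Finset.sum_congr rfl h1, Finset.sum_add_distrib,
      Finset.sum_ite_eq' (range n) ((i : ℕ)) (fun _ => 2 * (c i : ℤ) + 1),
      if_pos (Finset.mem_range.2 i.isLt)]
  have hPr : ∑ k ∈ range n, (ext n b (k + 1) : ℤ) * ext n b (k + 2)
      = (∑ k ∈ range n, (ext n c (k + 1) : ℤ) * ext n c (k + 2))
        + (ext n c ((i : ℕ) + 2) : ℤ) + (ext n c (i : ℕ) : ℤ) := by
    have h1 : ∀ k ∈ range n, (ext n b (k + 1) : ℤ) * ext n b (k + 2)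
        = (ext n c (k + 1) : ℤ) * ext n c (k + 2)
          + ((if k = (i : ℕ) then (ext n c ((i : ℕ) + 2) : ℤ) else 0)
            + (if k + 1 = (i : ℕ) then (ext n c (i : ℕ) : ℤ) else 0)) := by
      intro k hk
      rw [hb (k + 1), hb (k + 2)]
      by_cases hki : k = (i : ℕ)
      · subst hki
        rw [if_pos rfl, if_neg (by omega), if_pos rfl, if_neg (by omega)]
        ring
      · by_cases hki2 : k + 1 = (i : ℕ)
        · rw [if_neg (by omega), if_pos (by omega), if_neg hki, if_pos hki2, ← hki2]
          ring
        · rw [if_neg (by omega), if_neg (by omega), if_neg hki, if_neg hki2]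
          ring
    rw [Finset.sum_congr rfl h1, Finset.sum_add_distrib, Finset.sum_add_distrib,
      Finset.sum_ite_eq' (range n) ((i : ℕ)) (fun _ => (ext n c ((i : ℕ) + 2) : ℤ)),
      if_pos (Finset.mem_range.2 i.isLt)]
    have h2 : ∑ k ∈ range n, (if k + 1 = (i : ℕ) then (ext n c (i : ℕ) : ℤ) else 0)
        = (ext n c (i : ℕ) : ℤ) := by
      rcases Nat.eq_zero_or_pos (i : ℕ) with hi0 | hip
      · rw [hi0]
        simp [ext_zero]
      · have : ∀ k, (k + 1 = (i : ℕ)) ↔ (k = (i : ℕ) - 1) := by intro k; omega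
        simp only [this]
        rw [Finset.sum_ite_eq' (range n) ((i : ℕ) - 1) (fun _ => (ext n c (i : ℕ) : ℤ)),
          if_pos (Finset.mem_range.2 (by have := i.isLt; omega))]
    rw [h2]
    ring
  rw [pairA_cast, pairA_cast, hSq, hPr]
  ring

lemma qpochA_sub_delta (n : ℕ) (x : Fin n → ℕ) (i : Fin n) (hx : x i ≠ 0) :
    qpochA n x = qpochA n (fun j => x j - if j = i then 1 else 0) * (1 - q ^ (x i)) := by
  unfold qpochA
  rw [← Finset.mul_prod_erase univ (fun j => qpoch (x j)) (mem_univ i),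
    ← Finset.mul_prod_erase univ
      (fun j => qpoch ((fun j => x j - if j = i then 1 else 0) j)) (mem_univ i)]
  have h1 : qpoch (x i) = qpoch (x i - 1) * (1 - q ^ (x i)) := by
    obtain ⟨m, hm⟩ : ∃ m, x i = m + 1 := ⟨x i - 1, by omega⟩
    rw [hm]
    simpa using qpoch_succ m
  have h2 : ∏ j ∈ univ.erase i, qpoch ((fun j => x j - if j = i then 1 else 0) j)
      = ∏ j ∈ univ.erase i, qpoch (x j) := by
    refine Finset.prod_congr rfl fun j hj => ?_
    have hji : j ≠ i := (Finset.mem_erase.1 hj).1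
    simp [hji]
  rw [h2]
  have h3 : ((fun j => x j - if j = i then 1 else 0) i) = x i - 1 := by simp
  rw [h3, h1]
  ring

lemma scalarC (n : ℕ) (a b : Fin n → ℕ) :
    (∑ i ∈ range (n + 1), (q ^ ((ext n a (i + 1) : ℤ) - (ext n a i : ℤ)) - 1))
      - ∑ i : Fin n, q ^ ((ext n a ((i : ℕ) + 2) : ℤ) - (a i : ℤ)) *
          (1 - q ^ ((a i : ℤ) - (b i : ℤ)))
    = (∑ i ∈ range (n + 1), (q ^ ((ext n b (i + 1) : ℤ) - (ext n b i : ℤ)) - 1))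
      - ∑ i : Fin n, q ^ ((b i : ℤ) - (ext n b (i : ℕ) : ℤ)) *
          (1 - q ^ ((a i : ℤ) - (b i : ℤ))) := by
  set A : ℕ → ℤ := fun k => (ext n a k : ℤ) with hA
  set B : ℕ → ℤ := fun k => (ext n b k : ℤ) with hB
  have hfin1 : ∑ i : Fin n, q ^ ((ext n a ((i : ℕ) + 2) : ℤ) - (a i : ℤ)) *
      (1 - q ^ ((a i : ℤ) - (b i : ℤ)))
      = ∑ k ∈ range n, q ^ (A (k + 2) - A (k + 1)) * (1 - q ^ (A (k + 1) - B (k + 1))) := by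
    rw [← Fin.sum_univ_eq_sum_range
      (fun k => q ^ (A (k + 2) - A (k + 1)) * (1 - q ^ (A (k + 1) - B (k + 1)))) n]
    refine Finset.sum_congr rfl fun i _ => ?_
    rw [hA, hB]
    simp only [ext_succ]
  have hfin2 : ∑ i : Fin n, q ^ ((b i : ℤ) - (ext n b (i : ℕ) : ℤ)) *
      (1 - q ^ ((a i : ℤ) - (b i : ℤ)))
      = ∑ k ∈ range n, q ^ (B (k + 1) - B k) * (1 - q ^ (A (k + 1) - B (k + 1))) := by
    rw [← Fin.sum_univ_eq_sum_range
      (fun k => q ^ (B (k + 1) - B k) * (1 - q ^ (A (k + 1) - B (k + 1)))) n]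
    refine Finset.sum_congr rfl fun i _ => ?_
    rw [hA, hB]
    simp only [ext_succ]
  rw [hfin1, hfin2]
  have hsplit1 : ∑ i ∈ range (n + 1), (q ^ (A (i + 1) - A i) - 1)
      = (∑ i ∈ range (n + 1), q ^ (A (i + 1) - A i)) - ((n : ℤ) + 1) • (1 : RatFunc ℚ) := by
    rw [Finset.sum_sub_distrib, Finset.sum_const, card_range]
    norm_num
  have hsplit2 : ∑ i ∈ range (n + 1), (q ^ (B (i + 1) - B i) - 1)
      = (∑ i ∈ range (n + 1), q ^ (B (i + 1) - B i)) - ((n : ℤ) + 1) • (1 : RatFunc ℚ) := by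
    rw [Finset.sum_sub_distrib, Finset.sum_const, card_range]
    norm_num
  have hexp1 : ∀ k ∈ range n, q ^ (A (k + 2) - A (k + 1)) * (1 - q ^ (A (k + 1) - B (k + 1)))
      = q ^ (A (k + 2) - A (k + 1)) - q ^ (A (k + 2) - B (k + 1)) := by
    intro k _
    rw [mul_one_sub, ← zpow_add₀ q_ne_zero]
    congr 2
    ring
  have hexp2 : ∀ k ∈ range n, q ^ (B (k + 1) - B k) * (1 - q ^ (A (k + 1) - B (k + 1)))
      = q ^ (B (k + 1) - B k) - q ^ (A (k + 1) - B k) := by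
    intro k _
    rw [mul_one_sub, ← zpow_add₀ q_ne_zero]
    congr 2
    ring
  rw [Finset.sum_congr rfl hexp1, Finset.sum_congr rfl hexp2, hsplit1, hsplit2,
    Finset.sum_sub_distrib, Finset.sum_sub_distrib]
  have p1 : ∑ k ∈ range (n + 1), q ^ (A (k + 1) - A k)
      = (∑ k ∈ range n, q ^ (A (k + 2) - A (k + 1))) + q ^ (A 1 - A 0) :=
    Finset.sum_range_succ' (fun k => q ^ (A (k + 1) - A k)) n
  have p2 : ∑ k ∈ range (n + 1), q ^ (A (k + 1) - B k)
      = (∑ k ∈ range n, q ^ (A (k + 2) - B (k + 1))) + q ^ (A 1 - B 0) :=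
    Finset.sum_range_succ' (fun k => q ^ (A (k + 1) - B k)) n
  have p1' : ∑ k ∈ range (n + 1), q ^ (B (k + 1) - B k)
      = (∑ k ∈ range n, q ^ (B (k + 1) - B k)) + q ^ (B (n + 1) - B n) :=
    Finset.sum_range_succ (fun k => q ^ (B (k + 1) - B k)) n
  have p2' : ∑ k ∈ range (n + 1), q ^ (A (k + 1) - B k)
      = (∑ k ∈ range n, q ^ (A (k + 1) - B k)) + q ^ (A (n + 1) - B n) :=
    Finset.sum_range_succ (fun k => q ^ (A (k + 1) - B k)) n
  have pe : q ^ (A 1 - A 0) = q ^ (A 1 - B 0) := by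
    rw [hA, hB]
    simp [ext_zero]
  have pe' : q ^ (B (n + 1) - B n) = q ^ (A (n + 1) - B n) := by
    rw [hA, hB]
    simp [ext_of_gt n a (by omega : n < n + 1), ext_of_gt n b (by omega : n < n + 1)]
  have pmid : ∀ k ∈ range n, q ^ (B (k + 1) - B k) * (1 : RatFunc ℚ) = q ^ (B (k + 1) - B k) :=
    fun k _ => mul_one _
  linear_combination p1 - p2 + pe + p2' - p1' - pe'

lemma Iic_sub_delta (n : ℕ) (a : Fin n → ℕ) (i : Fin n) (ha : a i ≠ 0) :
    Finset.Iic (fun j => a j - if j = i then 1 else 0)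
      = (Finset.Iic a).filter (fun b => b i ≠ a i) := by
  ext b
  simp only [Finset.mem_Iic, Finset.mem_filter, Pi.le_def]
  constructor
  · intro h
    have hi : b i ≤ a i - 1 := by simpa using h i
    constructor
    · intro j
      have hj := h j
      split_ifs at hj <;> omega
    · omega
  · rintro ⟨h1, h2⟩ j
    have := h1 j
    split_ifs with hji
    · subst hji
      omega
    · omega

lemma stepB (n : ℕ) (J : (Fin n → ℕ) → RatFunc ℚ)
    (hJ : ∀ α : Fin n → ℕ,
      J α = ∑ β ∈ Finset.Iic α, q ^ pairA n β / qpochA n (α - β) * J β)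
    (a : Fin n → ℕ) (i : Fin n) :
    q ^ ((ext n a ((i : ℕ) + 2) : ℤ) - (a i : ℤ)) *
      (if a i = 0 then 0 else J (fun j => a j - if j = i then 1 else 0))
    = ∑ b ∈ Finset.Iic a, q ^ pairA n b / qpochA n (a - b) *
        (q ^ ((ext n a ((i : ℕ) + 2) : ℤ) - (a i : ℤ)) *
          (1 - q ^ ((a i : ℤ) - (b i : ℤ)))) * J b := by
  by_cases ha : a i = 0
  · rw [if_pos ha, mul_zero]
    symm
    refine Finset.sum_eq_zero fun b hb => ?_
    have hbi : b i ≤ a i := (Finset.mem_Iic.1 hb) i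
    have hbi0 : b i = 0 := by omega
    rw [show ((a i : ℤ) - (b i : ℤ)) = 0 by rw [ha, hbi0]; ring, zpow_zero]
    ring
  · rw [if_neg ha, hJ (fun j => a j - if j = i then 1 else 0), Iic_sub_delta n a i ha,
      Finset.mul_sum]
    have hzero : ∀ b ∈ Finset.Iic a,
        q ^ pairA n b / qpochA n (a - b) *
          (q ^ ((ext n a ((i : ℕ) + 2) : ℤ) - (a i : ℤ)) *
            (1 - q ^ ((a i : ℤ) - (b i : ℤ)))) * J b ≠ 0 → b i ≠ a i := by
      intro b _ hne heq
      apply hne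
      rw [show ((a i : ℤ) - (b i : ℤ)) = 0 by rw [heq]; ring, zpow_zero]
      ring
    rw [← Finset.sum_filter_of_ne hzero]
    refine Finset.sum_congr rfl fun b hb => ?_
    obtain ⟨hble, hbne⟩ := Finset.mem_filter.1 hb
    have hble' : ∀ j, b j ≤ a j := Finset.mem_Iic.1 hble
    have hbi : b i < a i := lt_of_le_of_ne (hble' i) hbne
    have habi : (a - b) i ≠ 0 := by
      simp only [Pi.sub_apply]
      omega
    have h1 : ((fun j => a j - if j = i then 1 else 0) - b)
        = fun j => (a - b) j - if j = i then 1 else 0 := by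
      funext j
      simp only [Pi.sub_apply]
      split_ifs <;> omega
    have h2 : qpochA n (a - b)
        = qpochA n (fun j => (a - b) j - if j = i then 1 else 0) * (1 - q ^ ((a - b) i)) :=
      qpochA_sub_delta n (a - b) i habi
    have h3 : (1 : RatFunc ℚ) - q ^ ((a i : ℤ) - (b i : ℤ)) = 1 - q ^ ((a - b) i) := by
      rw [← zpow_natCast q ((a - b) i)]
      congr 2
      simp only [Pi.sub_apply]
      omega
    have hu : (1 : RatFunc ℚ) - q ^ ((a - b) i) ≠ 0 := one_sub_q_pow_ne_zero habi
    have hv : qpochA n (fun j => (a - b) j - if j = i then 1 else 0) ≠ 0 := qpochA_ne_zero n _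
    rw [h1, h2, h3]
    have hc : (1 - q ^ ((a - b) i)) /
        (qpochA n (fun j => (a - b) j - if j = i then 1 else 0) * (1 - q ^ ((a - b) i)))
        = 1 / qpochA n (fun j => (a - b) j - if j = i then 1 else 0) := by
      rw [div_eq_div_iff (mul_ne_zero hv hu) hv]
      ring
    calc q ^ ((ext n a ((i : ℕ) + 2) : ℤ) - (a i : ℤ)) *
          (q ^ pairA n b / qpochA n (fun j => (a - b) j - if j = i then 1 else 0) * J b)
        = (q ^ pairA n b * q ^ ((ext n a ((i : ℕ) + 2) : ℤ) - (a i : ℤ)) * J b) *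
            (1 / qpochA n (fun j => (a - b) j - if j = i then 1 else 0)) := by ring
      _ = (q ^ pairA n b * q ^ ((ext n a ((i : ℕ) + 2) : ℤ) - (a i : ℤ)) * J b) *
            ((1 - q ^ ((a - b) i)) /
              (qpochA n (fun j => (a - b) j - if j = i then 1 else 0) *
                (1 - q ^ ((a - b) i)))) := by rw [hc]
      _ = q ^ pairA n b /
            (qpochA n (fun j => (a - b) j - if j = i then 1 else 0) * (1 - q ^ ((a - b) i))) *
            (q ^ ((ext n a ((i : ℕ) + 2) : ℤ) - (a i : ℤ)) * (1 - q ^ ((a - b) i))) * J b := by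
          ring

lemma stepD (n : ℕ) (J : (Fin n → ℕ) → RatFunc ℚ) (a : Fin n → ℕ) (i : Fin n) :
    ∑ b ∈ Finset.Iic a, q ^ pairA n b / qpochA n (a - b) *
        (q ^ ((b i : ℤ) - (ext n b (i : ℕ) : ℤ)) * (1 - q ^ ((a i : ℤ) - (b i : ℤ)))) * J b
    = ∑ b ∈ Finset.Iic a, q ^ pairA n b / qpochA n (a - b) *
        (q ^ ((ext n b ((i : ℕ) + 2) : ℤ) - (b i : ℤ)) *
          (if b i = 0 then 0 else J (fun j => b j - if j = i then 1 else 0))) := by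
  have hz1 : ∀ b ∈ Finset.Iic a,
      q ^ pairA n b / qpochA n (a - b) *
        (q ^ ((b i : ℤ) - (ext n b (i : ℕ) : ℤ)) * (1 - q ^ ((a i : ℤ) - (b i : ℤ)))) * J b ≠ 0
      → b i ≠ a i := by
    intro b _ hne heq
    apply hne
    rw [show ((a i : ℤ) - (b i : ℤ)) = 0 by rw [heq]; ring, zpow_zero]
    ring
  have hz2 : ∀ b ∈ Finset.Iic a,
      q ^ pairA n b / qpochA n (a - b) *
        (q ^ ((ext n b ((i : ℕ) + 2) : ℤ) - (b i : ℤ)) *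
          (if b i = 0 then 0 else J (fun j => b j - if j = i then 1 else 0))) ≠ 0
      → b i ≠ 0 := by
    intro b _ hne heq
    apply hne
    rw [if_pos heq]
    ring
  rw [← Finset.sum_filter_of_ne hz1, ← Finset.sum_filter_of_ne hz2]
  refine Finset.sum_nbij' (fun c => fun j => c j + if j = i then 1 else 0)
    (fun b => fun j => b j - if j = i then 1 else 0) ?_ ?_ ?_ ?_ ?_
  · intro c hc
    simp only [Finset.mem_filter, Finset.mem_Iic, Pi.le_def] at hc ⊢
    obtain ⟨h1, h2⟩ := hc
    have hci : c i < a i := lt_of_le_of_ne (h1 i) h2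
    constructor
    · intro j
      have := h1 j
      split_ifs with hji
      · subst hji
        omega
      · omega
    · show c i + (if True then 1 else 0) ≠ 0
      rw [if_pos trivial]
      omega
  · intro b hb
    simp only [Finset.mem_filter, Finset.mem_Iic, Pi.le_def] at hb ⊢
    obtain ⟨h1, h2⟩ := hb
    constructor
    · intro j
      have := h1 j
      split_ifs <;> omega
    · have := h1 i
      show b i - (if True then 1 else 0) ≠ a i
      rw [if_pos trivial]
      omega
  · intro c _
    funext j
    show (c j + if j = i then 1 else 0) - (if j = i then 1 else 0) = c j
    split_ifs <;> omega
  · intro b hb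
    simp only [Finset.mem_filter, Finset.mem_Iic, Pi.le_def] at hb
    obtain ⟨h1, h2⟩ := hb
    funext j
    show (b j - if j = i then 1 else 0) + (if j = i then 1 else 0) = b j
    split_ifs with hji
    · subst hji
      omega
    · omega
  · intro c hc
    simp only [Finset.mem_filter, Finset.mem_Iic, Pi.le_def] at hc
    obtain ⟨h1, h2⟩ := hc
    have hci : c i < a i := lt_of_le_of_ne (h1 i) h2
    have hii : (if i = i then 1 else 0 : ℕ) = 1 := if_pos rfl
    have hsub : (a - fun j => c j + if j = i then 1 else 0)
        = fun j => (a - c) j - if j = i then 1 else 0 := by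
      funext j
      simp only [Pi.sub_apply]
      omega
    have hb2 : ext n (fun j => c j + if j = i then 1 else 0) ((i : ℕ) + 2)
        = ext n c ((i : ℕ) + 2) := by
      rw [ext_add n c i ((i : ℕ) + 2), if_neg (by omega : (i : ℕ) + 2 ≠ (i : ℕ) + 1), add_zero]
    have hχ : (fun j => (c j + if j = i then 1 else 0) - if j = i then 1 else 0) = c := by
      funext j
      split_ifs <;> omega
    have haci : (a - c) i ≠ 0 := by
      simp only [Pi.sub_apply]
      omega
    have hpoch : qpochA n (a - c)
        = qpochA n (fun j => (a - c) j - if j = i then 1 else 0) * (1 - q ^ ((a - c) i)) :=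
      qpochA_sub_delta n (a - c) i haci
    have hu : (1 : RatFunc ℚ) - q ^ ((a - c) i) ≠ 0 := one_sub_q_pow_ne_zero haci
    have hV : qpochA n (fun j => (a - c) j - if j = i then 1 else 0) ≠ 0 := qpochA_ne_zero n _
    have h3 : (1 : RatFunc ℚ) - q ^ ((a i : ℤ) - (c i : ℤ)) = 1 - q ^ ((a - c) i) := by
      rw [← zpow_natCast q ((a - c) i)]
      congr 2
      simp only [Pi.sub_apply]
      omega
    have hpair : (q : RatFunc ℚ) ^ pairA n (fun j => c j + if j = i then 1 else 0)
        = q ^ pairA n c * q ^ (2 * (c i : ℤ) + 1 - (ext n c (i : ℕ) : ℤ)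
            - (ext n c ((i : ℕ) + 2) : ℤ)) := by
      rw [← zpow_natCast q (pairA n (fun j => c j + if j = i then 1 else 0)),
        pairA_add_delta n c i,
        show (pairA n c : ℤ) + 2 * (c i : ℤ) + 1 - (ext n c (i : ℕ) : ℤ)
            - (ext n c ((i : ℕ) + 2) : ℤ)
          = (pairA n c : ℤ) + (2 * (c i : ℤ) + 1 - (ext n c (i : ℕ) : ℤ)
            - (ext n c ((i : ℕ) + 2) : ℤ)) by ring,
        zpow_add₀ q_ne_zero, zpow_natCast]
    have hif : (if c i + 1 = 0 then (0 : RatFunc ℚ) else J c) = J c := if_neg (by omega)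
    simp only [hsub, hb2, hχ, hii, hpair, hif, Nat.cast_add, Nat.cast_one]
    have hq : q ^ (2 * (c i : ℤ) + 1 - (ext n c (i : ℕ) : ℤ) - (ext n c ((i : ℕ) + 2) : ℤ))
          * q ^ ((ext n c ((i : ℕ) + 2) : ℤ) - ((c i : ℤ) + 1))
        = q ^ ((c i : ℤ) - (ext n c (i : ℕ) : ℤ)) := by
      rw [← zpow_add₀ q_ne_zero]
      congr 1
      ring
    rw [hpoch, h3]
    have hc2 : (1 - q ^ ((a - c) i)) /
        (qpochA n (fun j => (a - c) j - if j = i then 1 else 0) * (1 - q ^ ((a - c) i)))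
        = 1 / qpochA n (fun j => (a - c) j - if j = i then 1 else 0) := by
      rw [div_eq_div_iff (mul_ne_zero hV hu) hV]
      ring
    calc q ^ pairA n c /
          (qpochA n (fun j => (a - c) j - if j = i then 1 else 0) * (1 - q ^ ((a - c) i))) *
          (q ^ ((c i : ℤ) - (ext n c (i : ℕ) : ℤ)) * (1 - q ^ ((a - c) i))) * J c
        = (q ^ pairA n c * q ^ ((c i : ℤ) - (ext n c (i : ℕ) : ℤ)) * J c) *
            ((1 - q ^ ((a - c) i)) /
              (qpochA n (fun j => (a - c) j - if j = i then 1 else 0) *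
                (1 - q ^ ((a - c) i)))) := by ring
      _ = (q ^ pairA n c * q ^ ((c i : ℤ) - (ext n c (i : ℕ) : ℤ)) * J c) *
            (1 / qpochA n (fun j => (a - c) j - if j = i then 1 else 0)) := by rw [hc2]
      _ = (q ^ pairA n c *
            (q ^ (2 * (c i : ℤ) + 1 - (ext n c (i : ℕ) : ℤ) - (ext n c ((i : ℕ) + 2) : ℤ))
              * q ^ ((ext n c ((i : ℕ) + 2) : ℤ) - ((c i : ℤ) + 1))) * J c) *
            (1 / qpochA n (fun j => (a - c) j - if j = i then 1 else 0)) := by rw [hq]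
      _ = q ^ pairA n c *
            q ^ (2 * (c i : ℤ) + 1 - (ext n c (i : ℕ) : ℤ) - (ext n c ((i : ℕ) + 2) : ℤ)) /
            qpochA n (fun j => (a - c) j - if j = i then 1 else 0) *
            (q ^ ((ext n c ((i : ℕ) + 2) : ℤ) - ((c i : ℤ) + 1)) * J c) := by ring

noncomputable def Dd (n : ℕ) (J : (Fin n → ℕ) → RatFunc ℚ) (a : Fin n → ℕ) : RatFunc ℚ :=
  (∑ i ∈ Finset.range (n + 1),
      (q ^ ((ext n a (i + 1) : ℤ) - (ext n a i : ℤ)) - 1)) * J a -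
    ∑ i : Fin n, q ^ ((ext n a ((i : ℕ) + 2) : ℤ) - (a i : ℤ)) *
      (if a i = 0 then 0 else J (fun j => a j - if j = i then 1 else 0))

lemma star (n : ℕ) (J : (Fin n → ℕ) → RatFunc ℚ)
    (hJ : ∀ α : Fin n → ℕ,
      J α = ∑ β ∈ Finset.Iic α, q ^ pairA n β / qpochA n (α - β) * J β)
    (a : Fin n → ℕ) :
    Dd n J a = ∑ b ∈ Finset.Iic a, q ^ pairA n b / qpochA n (a - b) * Dd n J b := by
  calc Dd n J a
      = ∑ b ∈ Finset.Iic a,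
          ((∑ i ∈ range (n + 1), (q ^ ((ext n a (i + 1) : ℤ) - (ext n a i : ℤ)) - 1)) *
              (q ^ pairA n b / qpochA n (a - b) * J b))
        - ∑ i : Fin n, ∑ b ∈ Finset.Iic a, q ^ pairA n b / qpochA n (a - b) *
            (q ^ ((ext n a ((i : ℕ) + 2) : ℤ) - (a i : ℤ)) *
              (1 - q ^ ((a i : ℤ) - (b i : ℤ)))) * J b := by
        unfold Dd
        congr 1
        · rw [hJ a, Finset.mul_sum]
        · exact Finset.sum_congr rfl fun i _ => stepB n J hJ a i
    _ = ∑ b ∈ Finset.Iic a,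
          ((∑ i ∈ range (n + 1), (q ^ ((ext n a (i + 1) : ℤ) - (ext n a i : ℤ)) - 1)) *
              (q ^ pairA n b / qpochA n (a - b) * J b)
            - ∑ i : Fin n, q ^ pairA n b / qpochA n (a - b) *
                (q ^ ((ext n a ((i : ℕ) + 2) : ℤ) - (a i : ℤ)) *
                  (1 - q ^ ((a i : ℤ) - (b i : ℤ)))) * J b) := by
        rw [Finset.sum_comm, ← Finset.sum_sub_distrib]
    _ = ∑ b ∈ Finset.Iic a,
          ((∑ i ∈ range (n + 1), (q ^ ((ext n b (i + 1) : ℤ) - (ext n b i : ℤ)) - 1)) *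
              (q ^ pairA n b / qpochA n (a - b) * J b)
            - ∑ i : Fin n, q ^ pairA n b / qpochA n (a - b) *
                (q ^ ((b i : ℤ) - (ext n b (i : ℕ) : ℤ)) *
                  (1 - q ^ ((a i : ℤ) - (b i : ℤ)))) * J b) := by
        refine Finset.sum_congr rfl fun b _ => ?_
        have h := scalarC n a b
        have t1 : ∑ i : Fin n, q ^ pairA n b / qpochA n (a - b) *
            (q ^ ((ext n a ((i : ℕ) + 2) : ℤ) - (a i : ℤ)) *
              (1 - q ^ ((a i : ℤ) - (b i : ℤ)))) * J b
            = (∑ i : Fin n, q ^ ((ext n a ((i : ℕ) + 2) : ℤ) - (a i : ℤ)) *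
                (1 - q ^ ((a i : ℤ) - (b i : ℤ)))) *
              (q ^ pairA n b / qpochA n (a - b) * J b) := by
          rw [Finset.sum_mul]
          exact Finset.sum_congr rfl fun i _ => by ring
        have t2 : ∑ i : Fin n, q ^ pairA n b / qpochA n (a - b) *
            (q ^ ((b i : ℤ) - (ext n b (i : ℕ) : ℤ)) *
              (1 - q ^ ((a i : ℤ) - (b i : ℤ)))) * J b
            = (∑ i : Fin n, q ^ ((b i : ℤ) - (ext n b (i : ℕ) : ℤ)) *
                (1 - q ^ ((a i : ℤ) - (b i : ℤ)))) *
              (q ^ pairA n b / qpochA n (a - b) * J b) := by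
          rw [Finset.sum_mul]
          exact Finset.sum_congr rfl fun i _ => by ring
        linear_combination t2 - t1 + (q ^ pairA n b / qpochA n (a - b) * J b) * h
    _ = ∑ b ∈ Finset.Iic a,
          ((∑ i ∈ range (n + 1), (q ^ ((ext n b (i + 1) : ℤ) - (ext n b i : ℤ)) - 1)) *
              (q ^ pairA n b / qpochA n (a - b) * J b))
        - ∑ i : Fin n, ∑ b ∈ Finset.Iic a, q ^ pairA n b / qpochA n (a - b) *
            (q ^ ((b i : ℤ) - (ext n b (i : ℕ) : ℤ)) *
              (1 - q ^ ((a i : ℤ) - (b i : ℤ)))) * J b := by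
        rw [Finset.sum_sub_distrib, Finset.sum_comm]
    _ = ∑ b ∈ Finset.Iic a,
          ((∑ i ∈ range (n + 1), (q ^ ((ext n b (i + 1) : ℤ) - (ext n b i : ℤ)) - 1)) *
              (q ^ pairA n b / qpochA n (a - b) * J b))
        - ∑ i : Fin n, ∑ b ∈ Finset.Iic a, q ^ pairA n b / qpochA n (a - b) *
            (q ^ ((ext n b ((i : ℕ) + 2) : ℤ) - (b i : ℤ)) *
              (if b i = 0 then 0 else J (fun j => b j - if j = i then 1 else 0))) := by
        congr 1
        exact Finset.sum_congr rfl fun i _ => stepD n J a i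
    _ = ∑ b ∈ Finset.Iic a, q ^ pairA n b / qpochA n (a - b) * Dd n J b := by
        rw [Finset.sum_comm, ← Finset.sum_sub_distrib]
        refine Finset.sum_congr rfl fun b _ => ?_
        unfold Dd
        rw [mul_sub, Finset.mul_sum]
        ring

lemma ext_zero_fun (n : ℕ) (k : ℕ) : ext n (0 : Fin n → ℕ) k = 0 := by
  simp [_root_.ext]

lemma Dd_zero (n : ℕ) (J : (Fin n → ℕ) → RatFunc ℚ) : Dd n J 0 = 0 := by
  unfold Dd
  simp [ext_zero_fun]

lemma Dd_eq_zero (n : ℕ) (J : (Fin n → ℕ) → RatFunc ℚ)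
    (hJ : ∀ α : Fin n → ℕ,
      J α = ∑ β ∈ Finset.Iic α, q ^ pairA n β / qpochA n (α - β) * J β) :
    ∀ N (a : Fin n → ℕ), (∑ j, a j) ≤ N → Dd n J a = 0 := by
  intro N
  induction N with
  | zero =>
    intro a ha
    have h0 : ∀ j ∈ (Finset.univ : Finset (Fin n)), a j = 0 :=
      Finset.sum_eq_zero_iff.1 (Nat.le_zero.1 ha)
    have : a = 0 := funext fun j => h0 j (Finset.mem_univ j)
    rw [this]
    exact Dd_zero n J
  | succ N ih =>
    intro a ha
    by_cases h0 : a = 0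
    · rw [h0]
      exact Dd_zero n J
    · have hstar := star n J hJ a
      have hother : ∀ b ∈ Finset.Iic a, b ≠ a →
          q ^ pairA n b / qpochA n (a - b) * Dd n J b = 0 := by
        intro b hb hne
        have hble : ∀ j, b j ≤ a j := Finset.mem_Iic.1 hb
        obtain ⟨j0, hj0⟩ := Function.ne_iff.1 hne
        have hlt : (∑ j, b j) < ∑ j, a j :=
          Finset.sum_lt_sum (fun j _ => hble j)
            ⟨j0, Finset.mem_univ j0, lt_of_le_of_ne (hble j0) hj0⟩
        rw [ih b (by omega)]
        ring
      rw [Finset.sum_eq_single_of_mem a (Finset.mem_Iic.2 le_rfl) hother] at hstar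
      have hsub : a - a = (0 : Fin n → ℕ) := funext fun j => Nat.sub_self (a j)
      rw [hsub] at hstar
      have hq1 : qpochA n (0 : Fin n → ℕ) = 1 := by simp [qpochA, qpoch]
      rw [hq1, div_one] at hstar
      have hfac : (1 - q ^ pairA n a) * Dd n J a = 0 := by linear_combination hstar
      rcases mul_eq_zero.1 hfac with h | h
      · exact absurd h (one_sub_q_pow_ne_zero (by have := pairA_pos h0; omega))
      · exact h

end Stmt13

/-- in type `A_n`, if `𝔍` satisfies `𝔍₀ = 1` and the fermionic
recursion `𝔍_α = ∑_{0 ≤ β ≤ α} q^{(β,β)/2}/(q)_{α-β} 𝔍_β`, then it satisfies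
the Toda recursion
`(∑_{i=0}^n (q^{aᵢ₊₁-aᵢ} - 1)) 𝔍_α = ∑_{i=1}^n q^{aᵢ₊₁-aᵢ} 𝔍_{α-αᵢ}` for
`α ≠ 0`, with `a₀ = aₙ₊₁ = 0` and `𝔍_{α-αᵢ} = 0` when `aᵢ = 0`. -/
theorem stmt_13 (n : ℕ) (J : (Fin n → ℕ) → RatFunc ℚ)
    (hJ0 : J 0 = 1)
    (hJ : ∀ α : Fin n → ℕ,
      J α = ∑ β ∈ Finset.Iic α, q ^ pairA n β / qpochA n (α - β) * J β) :
    ∀ a : Fin n → ℕ, a ≠ 0 →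
      (∑ i ∈ Finset.range (n + 1),
          (q ^ ((ext n a (i + 1) : ℤ) - (ext n a i : ℤ)) - 1)) * J a =
        ∑ i : Fin n,
          q ^ ((ext n a ((i : ℕ) + 2) : ℤ) - (a i : ℤ)) *
            (if a i = 0 then 0 else J (fun j => a j - if j = i then 1 else 0)) := by
  intro a _
  have h := Stmt13.Dd_eq_zero n J hJ (∑ j, a j) a le_rfl
  unfold Stmt13.Dd at h
  exact sub_eq_zero.1 h
end

section
/- Let $n \ge 1$ and let $a_1,\dots,a_n$ be nonnegative integers with $a = a_1+\dots+a_n$ (for the root lattice of a simply-laced root system with edge set $E$ of the Dynkin diagram). For a multipartition $\lambda = (\lambda^{(1)},\dots,\lambda^{(n)})$ with $\lambda^{(i)}$ a partition with at most $a_i$ parts, and $\beta = \sum b_i\alpha_i$ with $b_i$ = number of nonzero parts of $\lambda^{(i)}$, define $\mu$ by removing 1 from each nonzero part of each $\lambda^{(i)}$. Then $d_\lambda = d_\mu + \sum_{i=1}^n b_i^2 - \sum_{(i_1,i_2)\in E} b_{i_1}b_{i_2}$, where $d_\lambda = \sum_{i=1}^n\sum_{j=1}^{a_i}(2j-1)\lambda^{(i)}_j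 - \sum_{(i_1,i_2)\in E}\sum_{j_1=1}^{a_{i_1}}\sum_{j_2=1}^{a_{i_2}}\min(\lambda^{(i_1)}_{j_1},\lambda^{(i_2)}_{j_2})$. -/
open Finset

/-- The monopole-formula exponent
`d_λ = ∑ᵢ ∑_{j=1}^{aᵢ} (2j-1) λ^{(i)}_j - ∑_{(i₁,i₂)∈E} ∑_{j₁,j₂} min(λ^{(i₁)}_{j₁}, λ^{(i₂)}_{j₂})`
of a multipartition `λ` (here `λ i j` is the `(j+1)`-st part of `λ^{(i)}`). -/
def dExp (n : ℕ) (a : Fin n → ℕ) (E : Finset (Fin n × Fin n))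
    (lam : Fin n → ℕ → ℕ) : ℤ :=
  (∑ i, ∑ j ∈ Finset.range (a i), (2 * (j : ℤ) + 1) * (lam i j : ℤ)) -
    ∑ e ∈ E, ∑ j₁ ∈ Finset.range (a e.1), ∑ j₂ ∈ Finset.range (a e.2),
      (min (lam e.1 j₁) (lam e.2 j₂) : ℤ)

/-- The number of nonzero parts of `λ^{(i)}`. -/
def nparts (n : ℕ) (a : Fin n → ℕ) (lam : Fin n → ℕ → ℕ) (i : Fin n) : ℕ :=
  ((Finset.range (a i)).filter fun j => lam i j ≠ 0).card

/-- if `μ` is obtained from the multipartition `λ` by removing `1`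
from each nonzero part, and `bᵢ` is the number of nonzero parts of `λ^{(i)}`,
then `d_λ = d_μ + ∑ᵢ bᵢ² - ∑_{(i₁,i₂)∈E} b_{i₁} b_{i₂}`. -/
theorem stmt_18 (n : ℕ) (hn : 1 ≤ n) (a : Fin n → ℕ) (E : Finset (Fin n × Fin n))
    (lam : Fin n → ℕ → ℕ)
    (hdec : ∀ i, ∀ j k : ℕ, j ≤ k → lam i k ≤ lam i j)
    (hvan : ∀ i, ∀ j : ℕ, a i ≤ j → lam i j = 0) :
    dExp n a E lam =
      dExp n a E (fun i j => lam i j - 1) +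
        ∑ i, (nparts n a lam i : ℤ) ^ 2 -
        ∑ e ∈ E, (nparts n a lam e.1 : ℤ) * (nparts n a lam e.2 : ℤ) := by
  classical
  have hb : ∀ i j, lam i j ≠ 0 ↔ j < nparts n a lam i := by
    intro i j
    constructor
    · intro h
      have hsub : Finset.range (j + 1) ⊆
          (Finset.range (a i)).filter fun k => lam i k ≠ 0 := by
        intro k hk
        simp only [Finset.mem_range] at hk
        have hk' : lam i j ≤ lam i k := hdec i k j (by omega)
        have hne : lam i k ≠ 0 := by omega
        have hka : k < a i := by
          by_contra hka
          exact hne (hvan i k (by omega))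
        simp [Finset.mem_filter, Finset.mem_range, hka, hne]
      have := Finset.card_le_card hsub
      simpa [nparts] using this
    · intro hj h0
      have hsub : ((Finset.range (a i)).filter fun k => lam i k ≠ 0) ⊆
          Finset.range j := by
        intro k hk
        simp only [Finset.mem_filter, Finset.mem_range] at hk ⊢
        by_contra hkj
        have : lam i k ≤ lam i j := hdec i j k (by omega)
        omega
      have := Finset.card_le_card hsub
      simp only [Finset.card_range] at this
      have : nparts n a lam i ≤ j := this
      omega
  have hba : ∀ i, nparts n a lam i ≤ a i := by
    intro i
    have := Finset.card_filter_le (Finset.range (a i)) fun j => lam i j ≠ 0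
    simpa [nparts] using this
  have sum_odd : ∀ m : ℕ, ∑ j ∈ Finset.range m, (2 * (j : ℤ) + 1) = (m : ℤ) ^ 2 := by
    intro m
    induction m with
    | zero => simp
    | succ k ih => rw [Finset.sum_range_succ, ih]; push_cast; ring
  have partA : ∀ i, ∑ j ∈ Finset.range (a i), (2 * (j : ℤ) + 1) * (lam i j : ℤ)
      = (∑ j ∈ Finset.range (a i), (2 * (j : ℤ) + 1) * ((lam i j - 1 : ℕ) : ℤ))
        + (nparts n a lam i : ℤ) ^ 2 := by
    intro i
    have hfilt : ((Finset.range (a i)).filter fun j => j < nparts n a lam i)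
        = Finset.range (nparts n a lam i) := by
      ext k
      simp only [Finset.mem_filter, Finset.mem_range]
      exact ⟨fun h => h.2, fun h => ⟨lt_of_lt_of_le h (hba i), h⟩⟩
    have step : ∑ j ∈ Finset.range (a i), (2 * (j : ℤ) + 1) * (lam i j : ℤ)
        = ∑ j ∈ Finset.range (a i), ((2 * (j : ℤ) + 1) * ((lam i j - 1 : ℕ) : ℤ)
            + (if j < nparts n a lam i then 2 * (j : ℤ) + 1 else 0)) := by
      apply Finset.sum_congr rfl
      intro j _
      by_cases hj : j < nparts n a lam i
      · have hne : lam i j ≠ 0 := (hb i j).mpr hj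
        have hcast : ((lam i j - 1 : ℕ) : ℤ) = (lam i j : ℤ) - 1 := by omega
        simp only [hj, if_pos, hcast]
        ring
      · have h0 : lam i j = 0 := by
          by_contra hc
          exact hj ((hb i j).mp hc)
        simp [h0, hj]
    rw [step, Finset.sum_add_distrib, ← Finset.sum_filter, hfilt, sum_odd]
  have partB : ∀ e : Fin n × Fin n,
      ∑ j₁ ∈ Finset.range (a e.1), ∑ j₂ ∈ Finset.range (a e.2),
        (min (lam e.1 j₁) (lam e.2 j₂) : ℤ)
      = (∑ j₁ ∈ Finset.range (a e.1), ∑ j₂ ∈ Finset.range (a e.2),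
          ((min (lam e.1 j₁ - 1) (lam e.2 j₂ - 1) : ℕ) : ℤ))
        + (nparts n a lam e.1 : ℤ) * (nparts n a lam e.2 : ℤ) := by
    intro e
    have step : ∑ j₁ ∈ Finset.range (a e.1), ∑ j₂ ∈ Finset.range (a e.2),
          (min (lam e.1 j₁) (lam e.2 j₂) : ℤ)
        = ∑ j₁ ∈ Finset.range (a e.1), ∑ j₂ ∈ Finset.range (a e.2),
            (((min (lam e.1 j₁ - 1) (lam e.2 j₂ - 1) : ℕ) : ℤ)
              + (if lam e.1 j₁ ≠ 0 then (1 : ℤ) else 0)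
                * (if lam e.2 j₂ ≠ 0 then (1 : ℤ) else 0)) := by
      apply Finset.sum_congr rfl
      intro j₁ _
      apply Finset.sum_congr rfl
      intro j₂ _
      by_cases h1 : lam e.1 j₁ = 0 <;> by_cases h2 : lam e.2 j₂ = 0 <;>
        simp [h1, h2] <;> omega
    have hcard : ∀ i : Fin n,
        ∑ j ∈ Finset.range (a i), (if lam i j ≠ 0 then (1 : ℤ) else 0)
          = (nparts n a lam i : ℤ) := by
      intro i
      rw [Finset.sum_boole]
      simp [nparts]
    rw [step]
    have : ∑ j₁ ∈ Finset.range (a e.1), ∑ j₂ ∈ Finset.range (a e.2),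
        (((min (lam e.1 j₁ - 1) (lam e.2 j₂ - 1) : ℕ) : ℤ)
          + (if lam e.1 j₁ ≠ 0 then (1 : ℤ) else 0)
            * (if lam e.2 j₂ ≠ 0 then (1 : ℤ) else 0))
        = (∑ j₁ ∈ Finset.range (a e.1), ∑ j₂ ∈ Finset.range (a e.2),
            ((min (lam e.1 j₁ - 1) (lam e.2 j₂ - 1) : ℕ) : ℤ))
          + (∑ j₁ ∈ Finset.range (a e.1), (if lam e.1 j₁ ≠ 0 then (1 : ℤ) else 0))
            * (∑ j₂ ∈ Finset.range (a e.2), (if lam e.2 j₂ ≠ 0 then (1 : ℤ) else 0)) := by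
      rw [Finset.sum_mul_sum]
      rw [← Finset.sum_add_distrib]
      apply Finset.sum_congr rfl
      intro j₁ _
      rw [← Finset.sum_add_distrib]
    rw [this, hcard, hcard]
  simp only [dExp]
  rw [Finset.sum_congr rfl fun i _ => partA i,
    Finset.sum_congr rfl fun e _ => partB e,
    Finset.sum_add_distrib, Finset.sum_add_distrib]
  simp only [Nat.cast_min]
  ring
end
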